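/- arXiv:2204.04337 — 6 statements merged into one kernel-verified Lean document; each statement's English description precedes it below -/
import Mathlib

section
/- For every t > −1 and every s ∈ (0,1), ∫_s^1 ∫_{s₁}^1 ∫_{s₂}^1 s₁^{−1}(1−s₁)^{−1}·s₃^{−1}(1−s₃)^t ds₃ ds₂ ds₁ = −∫_s^1 (1−x)^t·x^{−1}·[x·ln(s/x) + (1−x)·ln((1−s)/(1−x))] dx, and both sides are finite. -/
open MeasureTheory Set Real

/-!
Tonelli on the triangle `{a < x < y < b}`, applied twice, turns the triple integral into
`∫_s^1 x⁻¹ (1-x)^t ∫_s^x (x-u) / (u (1-u)) du dx`, and the partial fraction decomposition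
`(x-u) / (u (1-u)) = x / u - (1-x) / (1-u)` evaluates the inner integral as
`x log (x/s) + (1-x) log ((1-x)/(1-s))`. This is at most `-log s - log (1-s)`, so the outer
integrand is bounded by a multiple of `(1-x)^t`, which is integrable near `1` because `t > -1`.
-/

lemma lintegral_Ioo_lintegral_Ioo_swap {a b : ℝ} {F : ℝ → ℝ → ENNReal}
    (hF : Measurable (Function.uncurry F)) :
    ∫⁻ x in Ioo a b, ∫⁻ y in Ioo x b, F x y = ∫⁻ y in Ioo a b, ∫⁻ x in Ioo a y, F x y := by
  set S : Set (ℝ × ℝ) := {p | a < p.1 ∧ p.1 < p.2 ∧ p.2 < b}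
  have hS : MeasurableSet S :=
    (measurableSet_lt measurable_const measurable_fst).inter
      ((measurableSet_lt measurable_fst measurable_snd).inter
        (measurableSet_lt measurable_snd measurable_const))
  simp_rw [← lintegral_indicator measurableSet_Ioo]
  calc ∫⁻ x, (Ioo a b).indicator (fun x => ∫⁻ y, (Ioo x b).indicator (F x) y) x
      = ∫⁻ x, ∫⁻ y, S.indicator (Function.uncurry F) (x, y) := by
        congr with x
        simp only [S, indicator_apply, mem_Ioo, mem_ofPred_eq, Function.uncurry_apply_pair]
        split_ifs with hx
        · congr with y; grind
        · exact ((lintegral_congr fun _ => if_neg (by grind)).trans lintegral_zero).symm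
    _ = ∫⁻ y, ∫⁻ x, S.indicator (Function.uncurry F) (x, y) :=
        lintegral_lintegral_swap (hF.indicator hS).aemeasurable
    _ = ∫⁻ y, (Ioo a b).indicator (fun y => ∫⁻ x, (Ioo a y).indicator (F · y) x) y := by
        congr with y
        simp only [S, indicator_apply, mem_Ioo, mem_ofPred_eq, Function.uncurry_apply_pair]
        split_ifs with hy
        · congr with x; grind
        · exact ((lintegral_congr fun _ => if_neg (by grind)).trans lintegral_zero)

lemma lintegral_Ioo_lintegral_Ioo_eq_lintegral_mul {a b : ℝ} {g : ℝ → ENNReal}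
    (hg : Measurable g) :
    ∫⁻ y in Ioo a b, ∫⁻ z in Ioo y b, g z = ∫⁻ z in Ioo a b, ENNReal.ofReal (z - a) * g z := by
  rw [lintegral_Ioo_lintegral_Ioo_swap (F := fun _ z => g z) (hg.comp measurable_snd)]
  simp only [setLIntegral_const, volume_Ioo, mul_comm]

lemma lintegral_Ioo_ofReal_deriv_eq_sub {g g' : ℝ → ℝ} {a b : ℝ} (hab : a ≤ b)
    (hcont : ContinuousOn g (Icc a b)) (hderiv : ∀ x ∈ Ioo a b, HasDerivAt g (g' x) x)
    (hpos : ∀ x ∈ Ioo a b, 0 ≤ g' x) :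
    ∫⁻ x in Ioo a b, ENNReal.ofReal (g' x) = ENNReal.ofReal (g b - g a) := by
  have hint := intervalIntegral.integrableOn_deriv_of_nonneg hcont hderiv hpos
  rw [← intervalIntegral.integral_eq_sub_of_hasDerivAt_of_le hab hcont hderiv
      ((intervalIntegrable_iff_integrableOn_Ioc_of_le hab).2 hint),
    intervalIntegral.integral_of_le hab, integral_Ioc_eq_integral_Ioo,
    ofReal_integral_eq_lintegral_ofReal (hint.mono_set Ioo_subset_Ioc_self)
      ((ae_restrict_iff' measurableSet_Ioo).2 (.of_forall hpos))]

lemma hasDerivAt_mul_log_add_mul_log_one_sub (x : ℝ) {u : ℝ} (hu0 : 0 < u) (hu1 : u < 1) :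
    HasDerivAt (fun u => x * log u + (1 - x) * log (1 - u))
      ((x - u) * (u⁻¹ * (1 - u)⁻¹)) u := by
  have hu1' : 1 - u ≠ 0 := sub_ne_zero.2 hu1.ne'
  have hlog : HasDerivAt (fun u => log (1 - u)) (-1 / (1 - u)) u := by
    simpa using ((hasDerivAt_id u).const_sub 1).log hu1'
  refine (((hasDerivAt_log hu0.ne').const_mul x).add (hlog.const_mul (1 - x))).congr_deriv ?_
  field_simp
  ring

lemma lintegral_Ioo_sub_mul_inv_mul_inv {s x : ℝ} (hs : 0 < s) (hsx : s ≤ x) (hx : x < 1) :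
    ∫⁻ u in Ioo s x, ENNReal.ofReal ((x - u) * (u⁻¹ * (1 - u)⁻¹))
      = ENNReal.ofReal (-(x * log (s / x) + (1 - x) * log ((1 - s) / (1 - x)))) := by
  have hmem : ∀ u ∈ Icc s x, 0 < u ∧ u < 1 := fun u hu => ⟨hs.trans_le hu.1, hu.2.trans_lt hx⟩
  have hderiv : ∀ u ∈ Icc s x, HasDerivAt (fun u => x * log u + (1 - x) * log (1 - u))
      ((x - u) * (u⁻¹ * (1 - u)⁻¹)) u := fun u hu =>
    hasDerivAt_mul_log_add_mul_log_one_sub x (hmem u hu).1 (hmem u hu).2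
  have hcont : ContinuousOn (fun u => x * log u + (1 - x) * log (1 - u)) (Icc s x) :=
    fun u hu => (hderiv u hu).continuousAt.continuousWithinAt
  have hpos : ∀ u ∈ Ioo s x, 0 ≤ (x - u) * (u⁻¹ * (1 - u)⁻¹) := fun u hu => by
    obtain ⟨hu0, hu1⟩ := hmem u (Ioo_subset_Icc_self hu)
    exact mul_nonneg (sub_nonneg.2 hu.2.le)
      (mul_nonneg (inv_nonneg.2 hu0.le) (inv_nonneg.2 (sub_nonneg.2 hu1.le)))
  rw [lintegral_Ioo_ofReal_deriv_eq_sub hsx hcont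
      (fun u hu => hderiv u (Ioo_subset_Icc_self hu)) hpos,
    log_div hs.ne' (hs.trans_le hsx).ne', log_div (by linarith) (by linarith)]
  congr 1
  ring

lemma lintegral_Ioo_ofReal_sub_mul_ofReal_eq (t : ℝ) {s x : ℝ} (hs : 0 < s) (hsx : s ≤ x)
    (hx : x < 1) :
    ∫⁻ u in Ioo s x,
      ENNReal.ofReal (x - u) * ENNReal.ofReal (u⁻¹ * (1 - u)⁻¹ * (x⁻¹ * (1 - x) ^ t))
        = ENNReal.ofReal ((1 - x) ^ t * x⁻¹ *
          (-(x * log (s / x) + (1 - x) * log ((1 - s) / (1 - x))))) := by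
  have hc : 0 ≤ x⁻¹ * (1 - x) ^ t :=
    mul_nonneg (inv_nonneg.2 (hs.trans_le hsx).le) (rpow_nonneg (sub_nonneg.2 hx.le) t)
  calc _ = ∫⁻ u in Ioo s x, ENNReal.ofReal (x⁻¹ * (1 - x) ^ t) *
        ENNReal.ofReal ((x - u) * (u⁻¹ * (1 - u)⁻¹)) := by
        refine setLIntegral_congr_fun measurableSet_Ioo fun u hu => ?_
        rw [← ENNReal.ofReal_mul (sub_nonneg.2 hu.2.le), ← ENNReal.ofReal_mul hc]
        congr 1; ring
    _ = _ := by
        rw [lintegral_const_mul' _ _ ENNReal.ofReal_ne_top,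
          lintegral_Ioo_sub_mul_inv_mul_inv hs hsx hx, ← ENNReal.ofReal_mul hc]
        congr 1; ring

lemma neg_mul_log_div_add_mul_log_div_le {s x : ℝ} (hs0 : 0 < s) (hs1 : s < 1) (hx0 : 0 < x)
    (hx1 : x < 1) :
    -(x * log (s / x) + (1 - x) * log ((1 - s) / (1 - x))) ≤ -log s - log (1 - s) := by
  have hls : log s < 0 := log_neg hs0 hs1
  have hls' : log (1 - s) < 0 := log_neg (by linarith) (by linarith)
  have hlx : log x ≤ 0 := log_nonpos hx0.le hx1.le
  have hlx' : log (1 - x) ≤ 0 := log_nonpos (by linarith) (by linarith)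
  rw [log_div hs0.ne' hx0.ne', log_div (by linarith) (by linarith)]
  nlinarith [mul_nonneg (sub_nonneg.2 hx1.le) (neg_nonneg.2 hls.le),
    mul_nonpos_of_nonneg_of_nonpos hx0.le hlx,
    mul_nonpos_of_nonneg_of_nonpos (sub_nonneg.2 hx1.le) hlx',
    mul_nonneg hx0.le (neg_nonneg.2 hls'.le)]

lemma integrableOn_Ioo_sub_rpow {t : ℝ} (ht : -1 < t) (a b : ℝ) :
    IntegrableOn (fun x => (b - x) ^ t) (Ioo a b) := by
  have h := (intervalIntegral.intervalIntegrable_rpow' ht (a := b - a) (b := 0)).comp_sub_left b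
  simp only [sub_sub_cancel, sub_zero] at h
  exact h.def'.mono_set (Ioo_subset_Ioc_self.trans Ioc_subset_uIoc)

lemma lintegral_Ioo_rpow_mul_neg_mul_log_div_ne_top {t : ℝ} (ht : -1 < t) {s : ℝ} (hs0 : 0 < s)
    (hs1 : s < 1) :
    ∫⁻ x in Ioo s 1, ENNReal.ofReal ((1 - x) ^ t * x⁻¹ *
      (-(x * log (s / x) + (1 - x) * log ((1 - s) / (1 - x))))) ≠ ⊤ := by
  set C := -log s - log (1 - s)
  have hC : 0 ≤ C := by linarith [log_neg hs0 hs1, log_neg (sub_pos.2 hs1) (by linarith)]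
  have hbound : ∀ x ∈ Ioo s 1, (1 - x) ^ t * x⁻¹ *
      (-(x * log (s / x) + (1 - x) * log ((1 - s) / (1 - x)))) ≤ s⁻¹ * C * (1 - x) ^ t := by
    intro x hx
    have hx0 : 0 < x := hs0.trans hx.1
    have hrp : 0 ≤ (1 - x) ^ t := rpow_nonneg (sub_nonneg.2 hx.2.le) t
    calc (1 - x) ^ t * x⁻¹ * (-(x * log (s / x) + (1 - x) * log ((1 - s) / (1 - x))))
        ≤ (1 - x) ^ t * x⁻¹ * C := by
          gcongr
          exact neg_mul_log_div_add_mul_log_div_le hs0 hs1 hx0 hx.2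
      _ ≤ (1 - x) ^ t * s⁻¹ * C := by
          gcongr
          exact hx.1.le
      _ = s⁻¹ * C * (1 - x) ^ t := by ring
  refine ne_top_of_le_ne_top
    ((integrableOn_Ioo_sub_rpow ht s 1).const_mul (s⁻¹ * C)).lintegral_lt_top.ne ?_
  exact setLIntegral_mono (by fun_prop) fun x hx => ENNReal.ofReal_le_ofReal (hbound x hx)

/-- The triple-integral identity used in the computation of `ρ_t`:
`∫_s^1 ∫_{s₁}^1 ∫_{s₂}^1 s₁^{−1}(1−s₁)^{−1} s₃^{−1}(1−s₃)^t ds₃ ds₂ ds₁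
  = −∫_s^1 (1−x)^t x^{−1} [x ln(s/x) + (1−x) ln((1−s)/(1−x))] dx`,
and both sides are finite. -/
theorem stmt5 (t : ℝ) (ht : -1 < t) (s : ℝ) (hs : s ∈ Set.Ioo (0 : ℝ) 1) :
    (∫⁻ s₁ in Set.Ioo s 1, ∫⁻ s₂ in Set.Ioo s₁ 1, ∫⁻ s₃ in Set.Ioo s₂ 1,
        ENNReal.ofReal (s₁⁻¹ * (1 - s₁)⁻¹ * (s₃⁻¹ * (1 - s₃) ^ t)))
      = (∫⁻ x in Set.Ioo s 1, ENNReal.ofReal ((1 - x) ^ t * x⁻¹ *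
          (-(x * Real.log (s / x) + (1 - x) * Real.log ((1 - s) / (1 - x)))))) ∧
    (∫⁻ s₁ in Set.Ioo s 1, ∫⁻ s₂ in Set.Ioo s₁ 1, ∫⁻ s₃ in Set.Ioo s₂ 1,
        ENNReal.ofReal (s₁⁻¹ * (1 - s₁)⁻¹ * (s₃⁻¹ * (1 - s₃) ^ t))) ≠ ⊤ := by
  obtain ⟨hs0, hs1⟩ := hs
  have heq : (∫⁻ s₁ in Ioo s 1, ∫⁻ s₂ in Ioo s₁ 1, ∫⁻ s₃ in Ioo s₂ 1,
      ENNReal.ofReal (s₁⁻¹ * (1 - s₁)⁻¹ * (s₃⁻¹ * (1 - s₃) ^ t)))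
        = ∫⁻ x in Ioo s 1, ENNReal.ofReal ((1 - x) ^ t * x⁻¹ *
          (-(x * log (s / x) + (1 - x) * log ((1 - s) / (1 - x))))) := by
    rw [← setLIntegral_congr_fun measurableSet_Ioo
        fun x hx => lintegral_Ioo_ofReal_sub_mul_ofReal_eq t hs0 hx.1.le hx.2,
      ← lintegral_Ioo_lintegral_Ioo_swap (by fun_prop)]
    exact lintegral_congr fun s₁ => lintegral_Ioo_lintegral_Ioo_eq_lintegral_mul (by fun_prop)
  exact ⟨heq, heq ▸ lintegral_Ioo_rpow_mul_neg_mul_log_div_ne_top ht hs0 hs1⟩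
end

section
/- There exists a constant C > 0 such that for every x ∈ (0,1), ∫_0^x (1−s)^{−1/2}·F(s,x) ds ≤ C·x². -/
open MeasureTheory

/-- `F(s,x) = −[x ln(s/x) + (1−x) ln((1−s)/(1−x))]`. -/
noncomputable def Ffn (s x : ℝ) : ℝ :=
  -(x * Real.log (s / x) + (1 - x) * Real.log ((1 - s) / (1 - x)))

lemma log_le_two_sqrt {t : ℝ} (ht : 0 < t) : Real.log t ≤ 2 * Real.sqrt t := by
  have h1 : Real.log (Real.sqrt t) ≤ Real.sqrt t - 1 :=
    Real.log_le_sub_one_of_pos (Real.sqrt_pos.2 ht)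
  have h2 : Real.log (Real.sqrt t) = Real.log t / 2 := Real.log_sqrt ht.le
  nlinarith [Real.sqrt_nonneg t]

lemma Ffn_le {s x : ℝ} (hs : 0 < s) (hsx : s < x) (hx1 : x < 1) :
    Ffn s x ≤ x * Real.log (x / s) := by
  have hx0 : 0 < x := hs.trans hsx
  have h1 : Real.log (s / x) = - Real.log (x / s) := by
    rw [← Real.log_inv]
    congr 1
    field_simp
  have h2 : 0 ≤ Real.log ((1 - s) / (1 - x)) := by
    apply Real.log_nonneg
    rw [le_div_iff₀ (by linarith)]
    linarith
  have hx1' : (0:ℝ) ≤ 1 - x := by linarith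
  unfold Ffn
  rw [h1]
  nlinarith [mul_nonneg hx1' h2]

lemma rpow_neg_half_eq {s : ℝ} (hs : 0 ≤ s) :
    s ^ (-(1/2) : ℝ) = (Real.sqrt s)⁻¹ := by
  rw [Real.rpow_neg hs, ← Real.sqrt_eq_rpow]

lemma rpow_neg_half_le_sqrt_two {s : ℝ} (hs : s ≤ 1/2) :
    (1 - s) ^ (-(1/2) : ℝ) ≤ Real.sqrt 2 := by
  have h := Real.rpow_le_rpow_of_nonpos (by norm_num : (0:ℝ) < 1/2)
    (by linarith : (1:ℝ)/2 ≤ 1 - s) (by norm_num : -(1/2:ℝ) ≤ 0)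
  refine h.trans_eq ?_
  rw [rpow_neg_half_eq (by norm_num : (0:ℝ) ≤ 1/2)]
  rw [show (1:ℝ)/2 = (2:ℝ)⁻¹ by norm_num, Real.sqrt_inv, inv_inv]

/-- `∫⁻ s in (0,b), s^(-1/2) = 2 √b`. -/
lemma lint_half {b : ℝ} (hb : 0 < b) :
    (∫⁻ s in Set.Ioo (0:ℝ) b, ENNReal.ofReal (s ^ (-(1/2) : ℝ)))
      = ENNReal.ofReal (2 * Real.sqrt b) := by
  rw [Measure.restrict_congr_set Ioo_ae_eq_Ioc]
  have hint : IntegrableOn (fun s : ℝ => s ^ (-(1/2) : ℝ)) (Set.Ioc 0 b) := by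
    have h := intervalIntegral.intervalIntegrable_rpow' (a := 0) (b := b)
      (r := -(1/2)) (by norm_num)
    rwa [intervalIntegrable_iff_integrableOn_Ioc_of_le hb.le] at h
  have hnn : 0 ≤ᵐ[volume.restrict (Set.Ioc (0:ℝ) b)]
      fun s : ℝ => s ^ (-(1/2) : ℝ) := by
    filter_upwards [ae_restrict_mem measurableSet_Ioc] with s hs
    exact Real.rpow_nonneg hs.1.le _
  rw [← ofReal_integral_eq_lintegral_ofReal hint hnn]
  congr 1
  have h1 : ∫ s in Set.Ioc (0:ℝ) b, s ^ (-(1/2) : ℝ)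
      = ∫ s in (0:ℝ)..b, s ^ (-(1/2) : ℝ) := by
    rw [intervalIntegral.integral_of_le hb.le]
  rw [h1, integral_rpow (Or.inl (by norm_num)), Real.zero_rpow (by norm_num),
    Real.sqrt_eq_rpow]
  norm_num
  ring

lemma sqrt_two_le_two : Real.sqrt 2 ≤ 2 := by
  nlinarith [Real.sq_sqrt (by norm_num : (0:ℝ) ≤ 2), Real.sqrt_nonneg 2]

/-- pointwise bound for `s < x ≤ 1/2`. -/
lemma pt1 {s x : ℝ} (hs : 0 < s) (hsx : s < x) (hx1 : x < 1) (hs2 : s ≤ 1/2) :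
    (1 - s) ^ (-(1/2) : ℝ) * Ffn s x
      ≤ (2 * Real.sqrt 2 * (x * Real.sqrt x)) * s ^ (-(1/2) : ℝ) := by
  have hx0 : 0 < x := hs.trans hsx
  have h1s : (0:ℝ) < 1 - s := by linarith
  have ha : (0:ℝ) ≤ (1 - s) ^ (-(1/2) : ℝ) := Real.rpow_nonneg h1s.le _
  have ha2 : (1 - s) ^ (-(1/2) : ℝ) ≤ Real.sqrt 2 := rpow_neg_half_le_sqrt_two hs2
  have ht : (0:ℝ) ≤ s ^ (-(1/2) : ℝ) := Real.rpow_nonneg hs.le _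
  have hL0 : 0 ≤ Real.log (x / s) := Real.log_nonneg (by
    rw [le_div_iff₀ hs]; linarith)
  have hL : Real.log (x / s) ≤ 2 * Real.sqrt x * s ^ (-(1/2) : ℝ) := by
    have h := log_le_two_sqrt (div_pos hx0 hs)
    rw [rpow_neg_half_eq hs.le]
    calc Real.log (x / s) ≤ 2 * Real.sqrt (x / s) := h
      _ = 2 * (Real.sqrt x / Real.sqrt s) := by rw [Real.sqrt_div hx0.le]
      _ = 2 * Real.sqrt x * (Real.sqrt s)⁻¹ := by ring
  have hF : Ffn s x ≤ x * Real.log (x / s) := Ffn_le hs hsx hx1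
  calc (1 - s) ^ (-(1/2) : ℝ) * Ffn s x
      ≤ (1 - s) ^ (-(1/2) : ℝ) * (x * Real.log (x / s)) :=
        mul_le_mul_of_nonneg_left hF ha
    _ ≤ Real.sqrt 2 * (x * Real.log (x / s)) :=
        mul_le_mul_of_nonneg_right ha2 (mul_nonneg hx0.le hL0)
    _ ≤ Real.sqrt 2 * (x * (2 * Real.sqrt x * s ^ (-(1/2) : ℝ))) := by
        have h2 := mul_le_mul_of_nonneg_left hL hx0.le
        nlinarith [Real.sqrt_nonneg (2:ℝ)]
    _ = (2 * Real.sqrt 2 * (x * Real.sqrt x)) * s ^ (-(1/2) : ℝ) := by ring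

/-- pointwise bound for `s < 1/2 ≤ x`. -/
lemma pt2 {s x : ℝ} (hs : 0 < s) (hs2 : s < 1/2) (hx2 : 1/2 ≤ x) (hx1 : x < 1) :
    (1 - s) ^ (-(1/2) : ℝ) * Ffn s x ≤ (2 * Real.sqrt 2) * s ^ (-(1/2) : ℝ) := by
  have hsx : s < x := lt_of_lt_of_le hs2 hx2
  have hx0 : 0 < x := hs.trans hsx
  have h1s : (0:ℝ) < 1 - s := by linarith
  have ha : (0:ℝ) ≤ (1 - s) ^ (-(1/2) : ℝ) := Real.rpow_nonneg h1s.le _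
  have ht : (0:ℝ) ≤ s ^ (-(1/2) : ℝ) := Real.rpow_nonneg hs.le _
  have ha2 : (1 - s) ^ (-(1/2) : ℝ) ≤ Real.sqrt 2 := rpow_neg_half_le_sqrt_two hs2.le
  have hL0 : 0 ≤ Real.log (x / s) := Real.log_nonneg (by
    rw [le_div_iff₀ hs]; linarith)
  have hF : Ffn s x ≤ 2 * s ^ (-(1/2) : ℝ) := by
    have h1 : Ffn s x ≤ x * Real.log (x / s) := Ffn_le hs hsx hx1
    have h2 : x * Real.log (x / s) ≤ Real.log (x / s) := by nlinarith
    have h3 : Real.log (x / s) ≤ Real.log (1 / s) :=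
      Real.log_le_log (div_pos hx0 hs) (by gcongr)
    have h4 : Real.log (1 / s) ≤ 2 * s ^ (-(1/2) : ℝ) := by
      have h := log_le_two_sqrt (by positivity : (0:ℝ) < 1 / s)
      rw [rpow_neg_half_eq hs.le]
      rwa [one_div, Real.sqrt_inv, ← one_div] at h
    linarith
  rcases le_or_gt (Ffn s x) 0 with h | h
  · have : (1 - s) ^ (-(1/2) : ℝ) * Ffn s x ≤ 0 := mul_nonpos_of_nonneg_of_nonpos ha h
    have hr : (0:ℝ) ≤ (2 * Real.sqrt 2) * s ^ (-(1/2) : ℝ) := by positivity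
    linarith
  · calc (1 - s) ^ (-(1/2) : ℝ) * Ffn s x
        ≤ Real.sqrt 2 * Ffn s x := mul_le_mul_of_nonneg_right ha2 h.le
      _ ≤ Real.sqrt 2 * (2 * s ^ (-(1/2) : ℝ)) :=
          mul_le_mul_of_nonneg_left hF (Real.sqrt_nonneg 2)
      _ = (2 * Real.sqrt 2) * s ^ (-(1/2) : ℝ) := by ring

/-- pointwise bound for `1/2 ≤ s < x`. -/
lemma pt3 {s x : ℝ} (hs2 : 1/2 ≤ s) (hsx : s < x) (hx1 : x < 1) :
    (1 - s) ^ (-(1/2) : ℝ) * Ffn s x ≤ 2 := by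
  have hs : (0:ℝ) < s := by linarith
  have hx0 : 0 < x := hs.trans hsx
  have h1s : (0:ℝ) < 1 - s := by linarith
  have ha : (0:ℝ) ≤ (1 - s) ^ (-(1/2) : ℝ) := Real.rpow_nonneg h1s.le _
  have hL0 : 0 ≤ Real.log (x / s) := Real.log_nonneg (by
    rw [le_div_iff₀ hs]; linarith)
  have hF : Ffn s x ≤ 2 * (1 - s) := by
    have h1 : Ffn s x ≤ x * Real.log (x / s) := Ffn_le hs hsx hx1
    have h2 : x * Real.log (x / s) ≤ Real.log (x / s) := by nlinarith
    have h3 : Real.log (x / s) ≤ Real.log (1 / s) :=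
      Real.log_le_log (div_pos hx0 hs) (by gcongr)
    have h4 : Real.log (1 / s) ≤ 1 / s - 1 :=
      Real.log_le_sub_one_of_pos (by positivity)
    have h5 : 1 / s - 1 ≤ 2 * (1 - s) := by
      rw [div_sub_one hs.ne', div_le_iff₀ hs]
      nlinarith
    linarith
  rcases le_or_gt (Ffn s x) 0 with h | h
  · nlinarith
  · have key : (1 - s) ^ (-(1/2) : ℝ) * (1 - s) = (1 - s) ^ ((1:ℝ)/2) := by
      have hadd := Real.rpow_add h1s (-(1/2)) 1
      rw [Real.rpow_one] at hadd
      rw [← hadd]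
      norm_num
    have hle1 : (1 - s) ^ ((1:ℝ)/2) ≤ 1 :=
      Real.rpow_le_one h1s.le (by linarith) (by norm_num)
    calc (1 - s) ^ (-(1/2) : ℝ) * Ffn s x
        ≤ (1 - s) ^ (-(1/2) : ℝ) * (2 * (1 - s)) := mul_le_mul_of_nonneg_left hF ha
      _ = 2 * ((1 - s) ^ (-(1/2) : ℝ) * (1 - s)) := by ring
      _ = 2 * (1 - s) ^ ((1:ℝ)/2) := by rw [key]
      _ ≤ 2 := by linarith

lemma lint_const_half {b K : ℝ} (hb : 0 < b) (hK : 0 ≤ K) :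
    (∫⁻ s in Set.Ioo (0:ℝ) b, ENNReal.ofReal (K * s ^ (-(1/2) : ℝ)))
      = ENNReal.ofReal (K * (2 * Real.sqrt b)) := by
  simp_rw [ENNReal.ofReal_mul hK]
  rw [lintegral_const_mul' _ _ ENNReal.ofReal_ne_top, lint_half hb]

/-- There is a constant `C > 0` such that `∫_0^x (1−s)^{−1/2} F(s,x) ds ≤ C x²` for
every `x ∈ (0,1)`. -/
theorem stmt6 :
    ∃ C : ℝ, 0 < C ∧ ∀ x ∈ Set.Ioo (0 : ℝ) 1,
      (∫⁻ s in Set.Ioo (0 : ℝ) x, ENNReal.ofReal ((1 - s) ^ (-(1 / 2) : ℝ) * Ffn s x))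
        ≤ ENNReal.ofReal (C * x ^ 2) := by
  refine ⟨26, by norm_num, ?_⟩
  rintro x ⟨hx0, hx1⟩
  rcases le_total x (1/2) with hx2 | hx2
  · -- small x : use pt1
    have hK : (0:ℝ) ≤ 2 * Real.sqrt 2 * (x * Real.sqrt x) := by positivity
    calc (∫⁻ s in Set.Ioo (0:ℝ) x, ENNReal.ofReal ((1 - s) ^ (-(1/2) : ℝ) * Ffn s x))
        ≤ ∫⁻ s in Set.Ioo (0:ℝ) x,
            ENNReal.ofReal ((2 * Real.sqrt 2 * (x * Real.sqrt x)) * s ^ (-(1/2) : ℝ)) := by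
          refine setLIntegral_mono' measurableSet_Ioo fun s hs => ?_
          exact ENNReal.ofReal_le_ofReal (pt1 hs.1 hs.2 hx1 (by linarith [hs.2]))
      _ = ENNReal.ofReal ((2 * Real.sqrt 2 * (x * Real.sqrt x)) * (2 * Real.sqrt x)) :=
          lint_const_half hx0 hK
      _ ≤ ENNReal.ofReal (26 * x ^ 2) := by
          apply ENNReal.ofReal_le_ofReal
          have hxx : Real.sqrt x * Real.sqrt x = x := Real.mul_self_sqrt hx0.le
          have h1 : 2 * Real.sqrt 2 * (x * Real.sqrt x) * (2 * Real.sqrt x)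
              = 4 * Real.sqrt 2 * (x * (Real.sqrt x * Real.sqrt x)) := by ring
          rw [h1, hxx]
          nlinarith [sqrt_two_le_two, Real.sqrt_nonneg 2, mul_nonneg hx0.le hx0.le]
  · -- large x : split at 1/2
    have hsplit : Set.Ioo (0:ℝ) x = Set.Ioo (0:ℝ) (1/2) ∪ Set.Ico (1/2) x := by
      ext s
      simp only [Set.mem_Ioo, Set.mem_Ico, Set.mem_union]
      constructor
      · rintro ⟨h1, h2⟩
        rcases lt_or_ge s (1/2) with h | h
        · exact Or.inl ⟨h1, h⟩
        · exact Or.inr ⟨h, h2⟩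
      · rintro (⟨h1, h2⟩ | ⟨h1, h2⟩)
        · exact ⟨h1, lt_of_lt_of_le h2 hx2⟩
        · exact ⟨by linarith, h2⟩
    have hdisj : Disjoint (Set.Ioo (0:ℝ) (1/2)) (Set.Ico (1/2) x) := by
      rw [Set.disjoint_left]
      rintro s ⟨_, h2⟩ ⟨h3, _⟩
      linarith
    rw [hsplit, lintegral_union measurableSet_Ico hdisj]
    have hp1 : (∫⁻ s in Set.Ioo (0:ℝ) (1/2),
        ENNReal.ofReal ((1 - s) ^ (-(1/2) : ℝ) * Ffn s x)) ≤ ENNReal.ofReal 4 := by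
      calc (∫⁻ s in Set.Ioo (0:ℝ) (1/2), ENNReal.ofReal ((1 - s) ^ (-(1/2) : ℝ) * Ffn s x))
          ≤ ∫⁻ s in Set.Ioo (0:ℝ) (1/2),
              ENNReal.ofReal ((2 * Real.sqrt 2) * s ^ (-(1/2) : ℝ)) := by
            refine setLIntegral_mono' measurableSet_Ioo fun s hs => ?_
            exact ENNReal.ofReal_le_ofReal (pt2 hs.1 hs.2 hx2 hx1)
        _ = ENNReal.ofReal ((2 * Real.sqrt 2) * (2 * Real.sqrt (1/2))) :=
            lint_const_half (by norm_num) (by positivity)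
        _ ≤ ENNReal.ofReal 4 := by
            apply ENNReal.ofReal_le_ofReal
            have h : Real.sqrt 2 * Real.sqrt (1/2) = 1 := by
              rw [← Real.sqrt_mul (by norm_num : (0:ℝ) ≤ 2)]
              norm_num
            nlinarith
    have hp2 : (∫⁻ s in Set.Ico (1/2:ℝ) x,
        ENNReal.ofReal ((1 - s) ^ (-(1/2) : ℝ) * Ffn s x)) ≤ ENNReal.ofReal 1 := by
      calc (∫⁻ s in Set.Ico (1/2:ℝ) x, ENNReal.ofReal ((1 - s) ^ (-(1/2) : ℝ) * Ffn s x))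
          ≤ ∫⁻ _ in Set.Ico (1/2:ℝ) x, ENNReal.ofReal 2 := by
            refine setLIntegral_mono' measurableSet_Ico fun s hs => ?_
            exact ENNReal.ofReal_le_ofReal (pt3 hs.1 hs.2 hx1)
        _ = ENNReal.ofReal 2 * volume (Set.Ico (1/2:ℝ) x) := setLIntegral_const _ _
        _ = ENNReal.ofReal 2 * ENNReal.ofReal (x - 1/2) := by rw [Real.volume_Ico]
        _ = ENNReal.ofReal (2 * (x - 1/2)) := by
            rw [ENNReal.ofReal_mul (by norm_num : (0:ℝ) ≤ 2)]
        _ ≤ ENNReal.ofReal 1 := ENNReal.ofReal_le_ofReal (by linarith)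
    calc _ ≤ ENNReal.ofReal 4 + ENNReal.ofReal 1 := add_le_add hp1 hp2
      _ = ENNReal.ofReal 5 := by
          rw [← ENNReal.ofReal_add (by norm_num) (by norm_num)]; norm_num
      _ ≤ ENNReal.ofReal (26 * x ^ 2) := by
          apply ENNReal.ofReal_le_ofReal
          nlinarith [sq_nonneg (x - 1/2)]
end

section
/- Let t > −1, let m be a positive integer, let a > m with a not an integer, let b ≥ 0, and let φ : (0,1) → [0,∞) be measurable with φ(s) ≤ M·s^{−a}(1−s)^b for all s ∈ (0,1), for some M > 0. Then there exists C > 0 such that 𝓖^{(t)}_m φ(s) ≤ C·s^{−a}(1−s)^b for all s ∈ (0,1). -/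
open MeasureTheory

lemma oneSubII (d : ℝ) (hd : -1 < d) (u v : ℝ) :
    IntervalIntegrable (fun r : ℝ => (1 - r) ^ d) volume u v := by
  have h := (intervalIntegral.intervalIntegrable_rpow' hd (a := 1 - u) (b := 1 - v)).comp_sub_left 1
  simpa using h

lemma oneSubVal (d : ℝ) (hd : -1 < d) (s : ℝ) :
    ∫ r in s..1, (1 - r) ^ d = (1 - s) ^ (d + 1) / (d + 1) := by
  have h := intervalIntegral.integral_comp_sub_left (a := s) (b := 1) (fun u : ℝ => u ^ d) 1
  rw [h]
  norm_num
  rw [integral_rpow (Or.inl hd), Real.zero_rpow (by linarith)]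
  ring

lemma setIooVal (f : ℝ → ℝ) (s u : ℝ) (h : s ≤ u) :
    ∫ r in Set.Ioo s u, f r = ∫ r in s..u, f r := by
  rw [intervalIntegral.integral_of_le h, MeasureTheory.integral_Ioc_eq_integral_Ioo]


/-- `𝓕^{(t)}_m φ(s) = ∫_s^1 r^{m−1} φ(r) (1−r)^t dr`. -/
noncomputable def Ft (t : ℝ) (m : ℕ) (φ : ℝ → ℝ) (s : ℝ) : ℝ :=
  ∫ r in Set.Ioo s 1, r ^ (m - 1) * φ r * (1 - r) ^ t

/-- `𝓖^{(t)}_m φ(s) = 𝓕^{(t)}_m φ(s) / (s^m (1−s)^{t+1})`. -/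
noncomputable def Gt (t : ℝ) (m : ℕ) (φ : ℝ → ℝ) (s : ℝ) : ℝ :=
  Ft t m φ s / (s ^ m * (1 - s) ^ (t + 1))

set_option maxHeartbeats 1000000 in
/-- If `φ(s) ≤ M s^{−a}(1−s)^b` on `(0,1)` with `a > m` not an integer and `b ≥ 0`,
then `𝓖^{(t)}_m φ(s) ≤ C s^{−a}(1−s)^b` on `(0,1)`. -/
theorem stmt7 (t : ℝ) (ht : -1 < t) (m : ℕ) (hm : 1 ≤ m) (a b : ℝ)
    (ha : (m : ℝ) < a) (hanint : ∀ z : ℤ, a ≠ (z : ℝ)) (hb : 0 ≤ b)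
    (φ : ℝ → ℝ) (hφmeas : Measurable φ)
    (hφ0 : ∀ s ∈ Set.Ioo (0 : ℝ) 1, 0 ≤ φ s)
    (M : ℝ) (hM : 0 < M)
    (hφle : ∀ s ∈ Set.Ioo (0 : ℝ) 1, φ s ≤ M * s ^ (-a) * (1 - s) ^ b) :
    ∃ C : ℝ, 0 < C ∧ ∀ s ∈ Set.Ioo (0 : ℝ) 1,
      Gt t m φ s ≤ C * s ^ (-a) * (1 - s) ^ b := by
  set c : ℝ := (m : ℝ) - 1 - a with hcdef
  set d : ℝ := t + b with hddef
  have hc1 : c + 1 < 0 := by rw [hcdef]; linarith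
  have hd1 : (0:ℝ) < d + 1 := by rw [hddef]; linarith
  have hdneg : -1 < d := by linarith
  set ψ : ℝ → ℝ := fun r => r ^ (m - 1) * φ r * (1 - r) ^ t with hψdef
  have hψm : Measurable ψ := by fun_prop
  -- pointwise bound
  have hpt : ∀ r ∈ Set.Ioo (0:ℝ) 1, ψ r ≤ M * (r ^ c * (1 - r) ^ d) := by
    intro r hr
    obtain ⟨hr0, hr1⟩ := hr
    have h1r : (0:ℝ) < 1 - r := by linarith
    have hle := hφle r ⟨hr0, hr1⟩
    have step : ψ r ≤ r ^ (m-1) * (M * r ^ (-a) * (1 - r) ^ b) * (1 - r) ^ t := by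
      apply mul_le_mul_of_nonneg_right _ (Real.rpow_nonneg h1r.le t)
      exact mul_le_mul_of_nonneg_left hle (pow_nonneg hr0.le _)
    refine step.trans_eq ?_
    have hmr : ((m - 1 : ℕ) : ℝ) = (m:ℝ) - 1 := by
      have := Nat.cast_sub (R := ℝ) hm; simpa using this
    rw [← Real.rpow_natCast r (m-1), hmr,
        show c = ((m:ℝ) - 1) + (-a) by rw [hcdef]; ring, Real.rpow_add hr0,
        show d = b + t by rw [hddef]; ring, Real.rpow_add h1r]
    ring
  have hψ0 : ∀ r ∈ Set.Ioo (0:ℝ) 1, 0 ≤ ψ r := by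
    intro r hr
    exact mul_nonneg (mul_nonneg (pow_nonneg hr.1.le _) (hφ0 r hr))
      (Real.rpow_nonneg (by linarith [hr.2] : (0:ℝ) ≤ 1 - r) t)
  -- integrability of ψ on Ioo s 1
  have hψint : ∀ s ∈ Set.Ioo (0:ℝ) 1, IntegrableOn ψ (Set.Ioo s 1) := by
    intro s hs
    obtain ⟨hs0, hs1⟩ := hs
    have hmaj : IntegrableOn (fun r => M * (s ^ c * (1 - r) ^ d)) (Set.Ioo s 1) := by
      have := (oneSubII d hdneg s 1)
      rw [intervalIntegrable_iff_integrableOn_Ioo_of_le hs1.le] at this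
      exact (this.const_mul (s ^ c)).const_mul M
    refine Integrable.mono' hmaj (hψm.aestronglyMeasurable.restrict) ?_
    rw [ae_restrict_iff' measurableSet_Ioo]
    filter_upwards with r hr
    have hr01 : r ∈ Set.Ioo (0:ℝ) 1 := ⟨lt_trans hs0 hr.1, hr.2⟩
    rw [Real.norm_of_nonneg (hψ0 r hr01)]
    refine (hpt r hr01).trans ?_
    have : r ^ c ≤ s ^ c := Real.rpow_le_rpow_of_nonpos hs0 hr.1.le (by linarith)
    have h1r : (0:ℝ) ≤ 1 - r := by linarith [hr.2]
    exact mul_le_mul_of_nonneg_left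
      (mul_le_mul_of_nonneg_right this (Real.rpow_nonneg h1r d)) hM.le
  -- constants
  set D : ℝ := max 1 (((1:ℝ)/2) ^ d) with hDdef
  have hD0 : 0 < D := lt_of_lt_of_le one_pos (le_max_left _ _)
  set E : ℝ := M * ((1:ℝ)/2) ^ c * (((1:ℝ)/2) ^ (d+1) / (d+1)) with hEdef
  have hE0 : 0 < E := by
    apply mul_pos (mul_pos hM (Real.rpow_pos_of_pos one_half_pos c))
    exact div_pos (Real.rpow_pos_of_pos one_half_pos _) hd1
  set e0 : ℝ := ((1:ℝ)/2) ^ (d+1) with he0def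
  have he00 : 0 < e0 := Real.rpow_pos_of_pos one_half_pos _
  set K1 : ℝ := 2 * M / (d+1) with hK1def
  have hK10 : 0 < K1 := div_pos (by linarith) hd1
  set K2 : ℝ := (M * D / (-(c+1)) + E) / e0 with hK2def
  have hK20 : 0 < K2 := by
    apply div_pos _ he00
    have : 0 < M * D / (-(c+1)) := div_pos (mul_pos hM hD0) (by linarith)
    linarith
  set C : ℝ := max K1 K2 with hCdef
  have hC0 : 0 < C := lt_of_lt_of_le hK10 (le_max_left _ _)
  -- key bound on Ft
  have key : ∀ s ∈ Set.Ioo (0:ℝ) 1, Ft t m φ s ≤ C * (s ^ (c+1) * (1-s) ^ (d+1)) := by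
    intro s hs
    obtain ⟨hs0, hs1⟩ := hs
    have h1s : (0:ℝ) < 1 - s := by linarith
    have hposfac : 0 < s ^ (c+1) * (1-s) ^ (d+1) :=
      mul_pos (Real.rpow_pos_of_pos hs0 _) (Real.rpow_pos_of_pos h1s _)
    rcases le_or_gt (1/2 : ℝ) s with hhalf | hhalf
    · -- s ≥ 1/2
      have hmaj : IntegrableOn (fun r => M * (s ^ c * (1 - r) ^ d)) (Set.Ioo s 1) := by
        have := (oneSubII d hdneg s 1)
        rw [intervalIntegrable_iff_integrableOn_Ioo_of_le hs1.le] at this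
        exact (this.const_mul (s ^ c)).const_mul M
      have h1 : Ft t m φ s ≤ ∫ r in Set.Ioo s 1, M * (s ^ c * (1 - r) ^ d) := by
        apply setIntegral_mono_on (hψint s ⟨hs0, hs1⟩) hmaj measurableSet_Ioo
        intro r hr
        have hr01 : r ∈ Set.Ioo (0:ℝ) 1 := ⟨lt_trans hs0 hr.1, hr.2⟩
        refine (hpt r hr01).trans ?_
        have : r ^ c ≤ s ^ c := Real.rpow_le_rpow_of_nonpos hs0 hr.1.le (by linarith)
        have h1r : (0:ℝ) ≤ 1 - r := by linarith [hr.2]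
        exact mul_le_mul_of_nonneg_left
          (mul_le_mul_of_nonneg_right this (Real.rpow_nonneg h1r d)) hM.le
      have h2 : ∫ r in Set.Ioo s 1, M * (s ^ c * (1 - r) ^ d)
          = M * s ^ c * ((1-s) ^ (d+1) / (d+1)) := by
        rw [setIooVal _ s 1 hs1.le]
        rw [intervalIntegral.integral_const_mul]
        rw [show (fun r => s ^ c * (1 - r) ^ d) = fun r => s ^ c * (1 - r) ^ d from rfl]
        rw [intervalIntegral.integral_const_mul, oneSubVal d hdneg s]
        ring
      have hsc2 : s ^ c ≤ 2 * s ^ (c+1) := by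
        have hh : s ^ (c+1) = s ^ c * s := by
          rw [Real.rpow_add hs0, Real.rpow_one]
        rw [hh]
        nlinarith [Real.rpow_pos_of_pos hs0 c]
      have hY : (0:ℝ) ≤ (1-s) ^ (d+1) := Real.rpow_nonneg h1s.le _
      have hfin : M * s ^ c * ((1-s) ^ (d+1) / (d+1)) ≤ K1 * (s ^ (c+1) * (1-s) ^ (d+1)) := by
        rw [hK1def,
          show M * s ^ c * ((1-s) ^ (d+1) / (d+1)) = (M * s ^ c * (1-s) ^ (d+1)) / (d+1) by ring,
          show 2*M/(d+1) * (s ^ (c+1) * (1-s) ^ (d+1))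
            = (2*M*(s ^ (c+1) * (1-s) ^ (d+1))) / (d+1) by ring]
        apply div_le_div_of_nonneg_right ?_ hd1.le
        calc M * s ^ c * (1-s) ^ (d+1) ≤ M * (2 * s ^ (c+1)) * (1-s) ^ (d+1) :=
              mul_le_mul_of_nonneg_right (mul_le_mul_of_nonneg_left hsc2 hM.le) hY
          _ = 2*M*(s ^ (c+1) * (1-s) ^ (d+1)) := by ring
      exact (h1.trans h2.le).trans
        (hfin.trans (mul_le_mul_of_nonneg_right (le_max_left K1 K2) hposfac.le))
    · have hs12 : s < 1/2 := hhalf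
      have h0notin : (0:ℝ) ∉ Set.uIcc s (1/2:ℝ) := by
        rw [Set.uIcc_of_le hs12.le]
        intro h0
        linarith [h0.1]
      have hsub : Set.Ioo s 1 = Set.Ioc s (1/2) ∪ Set.Ioo (1/2:ℝ) 1 :=
        (Set.Ioc_union_Ioo_eq_Ioo hs12.le (by norm_num)).symm
      have hdisj : Disjoint (Set.Ioc s (1/2:ℝ)) (Set.Ioo (1/2:ℝ) 1) := by
        rw [Set.disjoint_left]
        rintro r ⟨-, h2⟩ ⟨h3, -⟩
        linarith
      have hint := hψint s ⟨hs0, hs1⟩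
      have hint1 : IntegrableOn ψ (Set.Ioc s (1/2:ℝ)) :=
        hint.mono_set (by rw [hsub]; exact Set.subset_union_left)
      have hint2 : IntegrableOn ψ (Set.Ioo (1/2:ℝ) 1) :=
        hint.mono_set (by rw [hsub]; exact Set.subset_union_right)
      have hsplit : Ft t m φ s
          = (∫ r in Set.Ioc s (1/2:ℝ), ψ r) + ∫ r in Set.Ioo (1/2:ℝ) 1, ψ r := by
        rw [show Ft t m φ s = ∫ r in Set.Ioo s 1, ψ r from rfl, hsub]
        exact setIntegral_union hdisj measurableSet_Ioo hint1 hint2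
      -- piece 1
      have hDb : ∀ r ∈ Set.Ioc s (1/2:ℝ), (1-r) ^ d ≤ D := by
        intro r hr
        have h1r : (1:ℝ)/2 ≤ 1 - r := by linarith [hr.2]
        rcases le_or_gt 0 d with hd0 | hd0
        · exact le_trans
            (Real.rpow_le_one (by linarith) (by linarith [hr.1, hs0]) hd0) (le_max_left _ _)
        · exact le_trans
            (Real.rpow_le_rpow_of_nonpos one_half_pos h1r hd0.le) (le_max_right _ _)
      have hII : IntervalIntegrable (fun r : ℝ => r ^ c) volume s (1/2) :=
        intervalIntegral.intervalIntegrable_rpow (Or.inr h0notin)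
      have hmaj1 : IntegrableOn (fun r => M * D * r ^ c) (Set.Ioc s (1/2:ℝ)) := by
        have h2 := hII.const_mul (M*D)
        rwa [intervalIntegrable_iff_integrableOn_Ioc_of_le hs12.le] at h2
      have hb1 : (∫ r in Set.Ioc s (1/2:ℝ), ψ r) ≤ M * D * (s ^ (c+1) / (-(c+1))) := by
        have step1 : (∫ r in Set.Ioc s (1/2:ℝ), ψ r)
            ≤ ∫ r in Set.Ioc s (1/2:ℝ), M * D * r ^ c := by
          apply setIntegral_mono_on hint1 hmaj1 measurableSet_Ioc
          intro r hr
          have hr01 : r ∈ Set.Ioo (0:ℝ) 1 := ⟨lt_trans hs0 hr.1, by linarith [hr.2]⟩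
          refine (hpt r hr01).trans ?_
          have hd2 := hDb r hr
          have hrc : 0 ≤ r ^ c := Real.rpow_nonneg hr01.1.le c
          calc M * (r ^ c * (1-r) ^ d) ≤ M * (r ^ c * D) :=
                mul_le_mul_of_nonneg_left (mul_le_mul_of_nonneg_left hd2 hrc) hM.le
            _ = M * D * r ^ c := by ring
        refine step1.trans ?_
        rw [← intervalIntegral.integral_of_le hs12.le,
          intervalIntegral.integral_const_mul,
          integral_rpow (Or.inr ⟨by intro h; rw [h] at hc1; linarith, h0notin⟩)]
        have h12 : (0:ℝ) ≤ ((1:ℝ)/2) ^ (c+1) := Real.rpow_nonneg (by norm_num) _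
        have hne : c + 1 ≠ 0 := ne_of_lt hc1
        rw [show (((1:ℝ)/2) ^ (c+1) - s ^ (c+1)) / (c+1)
            = (s ^ (c+1) - ((1:ℝ)/2) ^ (c+1)) / (-(c+1)) by
              rw [div_eq_div_iff hne (neg_ne_zero.mpr hne)]; ring]
        apply mul_le_mul_of_nonneg_left ?_ (mul_nonneg hM.le hD0.le)
        apply div_le_div_of_nonneg_right ?_ (by linarith : (0:ℝ) ≤ -(c+1))
        linarith
      -- piece 2
      have hmaj2 : IntegrableOn (fun r => M * (((1:ℝ)/2) ^ c * (1 - r) ^ d))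
          (Set.Ioo (1/2:ℝ) 1) := by
        have h := oneSubII d hdneg (1/2) 1
        rw [intervalIntegrable_iff_integrableOn_Ioo_of_le (by norm_num : (1:ℝ)/2 ≤ 1)] at h
        exact (h.const_mul _).const_mul M
      have hb2 : (∫ r in Set.Ioo (1/2:ℝ) 1, ψ r) ≤ E := by
        have step1 : (∫ r in Set.Ioo (1/2:ℝ) 1, ψ r)
            ≤ ∫ r in Set.Ioo (1/2:ℝ) 1, M * (((1:ℝ)/2) ^ c * (1 - r) ^ d) := by
          apply setIntegral_mono_on hint2 hmaj2 measurableSet_Ioo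
          intro r hr
          have hr01 : r ∈ Set.Ioo (0:ℝ) 1 := ⟨by linarith [hr.1], hr.2⟩
          refine (hpt r hr01).trans ?_
          have hrc : r ^ c ≤ ((1:ℝ)/2) ^ c :=
            Real.rpow_le_rpow_of_nonpos one_half_pos hr.1.le (by linarith)
          have h1r : (0:ℝ) ≤ 1 - r := by linarith [hr.2]
          exact mul_le_mul_of_nonneg_left
            (mul_le_mul_of_nonneg_right hrc (Real.rpow_nonneg h1r d)) hM.le
        refine step1.trans ?_
        have hhv : ((1:ℝ) - 1/2) = 1/2 := by norm_num
        rw [setIooVal (fun r => M * (((1:ℝ)/2) ^ c * (1 - r) ^ d)) (1/2) 1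
            (by norm_num : (1:ℝ)/2 ≤ 1),
          intervalIntegral.integral_const_mul, intervalIntegral.integral_const_mul,
          oneSubVal d hdneg (1/2), hhv, hEdef, he0def]
        exact le_of_eq (by ring)
      -- combine
      have hu : (0:ℝ) < -(c+1) := by linarith
      have hsc1 : (0:ℝ) < s ^ (c+1) := Real.rpow_pos_of_pos hs0 _
      have hs1c : (1:ℝ) ≤ s ^ (c+1) :=
        Real.one_le_rpow_of_pos_of_le_one_of_nonpos hs0 hs1.le hc1.le
      have he0le : e0 ≤ (1-s) ^ (d+1) :=
        Real.rpow_le_rpow (by norm_num) (by linarith) hd1.le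
      have key2 : M * D * (s ^ (c+1) / (-(c+1))) + E ≤ K2 * (s ^ (c+1) * (1-s) ^ (d+1)) := by
        have e1 : M * D * (s ^ (c+1) / (-(c+1))) + E ≤ (M * D / (-(c+1)) + E) * s ^ (c+1) := by
          have hEE : E ≤ E * s ^ (c+1) := le_mul_of_one_le_right hE0.le hs1c
          have h2 : M * D * (s ^ (c+1) / (-(c+1))) = (M * D / (-(c+1))) * s ^ (c+1) := by ring
          linarith
        have e2 : (M * D / (-(c+1)) + E) * s ^ (c+1) = K2 * e0 * s ^ (c+1) := by
          rw [hK2def]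
          field_simp
        have e3 : K2 * e0 * s ^ (c+1) ≤ K2 * (s ^ (c+1) * (1-s) ^ (d+1)) := by
          have := mul_le_mul_of_nonneg_left he0le hK20.le
          nlinarith [hsc1]
        linarith [e1, e2.le, e2.ge, e3]
      rw [hsplit]
      refine le_trans (add_le_add hb1 hb2) (key2.trans ?_)
      exact mul_le_mul_of_nonneg_right (le_max_right K1 K2) hposfac.le
  -- conclude
  refine ⟨C, hC0, fun s hs => ?_⟩
  obtain ⟨hs0, hs1⟩ := hs
  have h1s : (0:ℝ) < 1 - s := by linarith
  have hden : 0 < s ^ m * (1-s) ^ (t+1) :=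
    mul_pos (pow_pos hs0 m) (Real.rpow_pos_of_pos h1s _)
  rw [Gt, div_le_iff₀ hden]
  refine (key s ⟨hs0, hs1⟩).trans_eq ?_
  have h1 : s ^ (c+1) = s ^ (-a) * s ^ (m:ℕ) := by
    rw [← Real.rpow_natCast s m, ← Real.rpow_add hs0]
    congr 1
    rw [hcdef]; ring
  have h2 : (1-s) ^ (d+1) = (1-s) ^ b * (1-s) ^ (t+1) := by
    rw [← Real.rpow_add h1s]
    congr 1
    rw [hddef]; ring
  rw [h1, h2]; ring
end

section
/- Let t > −1 and let n > 0, k ≥ 0 be integers. Then there exists C > 0 such that for all s ∈ (0,1), Φ^{(t)}_{n,k}(s) ≤ C·s^{−n−k+1/2}·(1−s)^k and 𝓖^{(t)}_{n+k}Φ^{(t)}_{n,k}(s) ≤ C·s^{−n−k−1/2}·(1−s)^k. -/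
/-!
`𝓖^{(t)}_m` turns a majorant `C r^e (1-r)^j` with `e ≥ -m - 1/2` into `K C s^{-m-1/2} (1-s)^j`,
where `K = 1 / min(1/2, t+1)`. Indeed `r^{m-1} r^e ≤ r^{-3/2}` and `(1-r)^j ≤ (1-s)^j` on `(s,1)`,
and `∫_s^1 r^{-3/2} (1-r)^t dr ≤ K s^{-1/2} (1-s)^{t+1}` because the derivative of
`-r^{-1/2} (1-r)^{t+1}` is the integrand times `(1-r)/2 + (t+1) r ≥ K⁻¹`.
Each step of the recursion applies `𝓖` twice and multiplies by `1-s`, so by induction on `k`,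
`Φ_{n,k}(s) ≤ K^{2k} s^{-n-k+1/2} (1-s)^k`; one more application of `𝓖` gives the second bound.
-/

open MeasureTheory

/-- `Φ^{(t)}_{n,0} ≡ 1` and `Φ^{(t)}_{n,k+1}(s) = (1−s) (𝓖^{(t)}_{n+k})² Φ^{(t)}_{n,k}(s)`. -/
noncomputable def Phi (t : ℝ) (n : ℕ) : ℕ → ℝ → ℝ
  | 0 => fun _ => 1
  | k + 1 => fun s => (1 - s) * Gt t (n + k) (Gt t (n + k) (Phi t n k)) s

open Set

lemma hasDerivAt_rpow_mul_one_sub_rpow (a b : ℝ) {x : ℝ} (hx : x ∈ Ioo 0 1) :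
    HasDerivAt (fun y => y ^ a * (1 - y) ^ b)
      (a * x ^ (a - 1) * (1 - x) ^ b - b * x ^ a * (1 - x) ^ (b - 1)) x := by
  have h1 : HasDerivAt (fun y : ℝ => (1 - y) ^ b) (-(b * (1 - x) ^ (b - 1))) x := by
    simpa using ((hasDerivAt_id x).const_sub 1).rpow_const (p := b) (Or.inl (sub_pos.2 hx.2).ne')
  exact ((Real.hasDerivAt_rpow_const (Or.inl hx.1.ne')).fun_mul h1).congr_deriv (by ring)

lemma integrableOn_rpow_mul_one_sub_rpow (a : ℝ) {t s : ℝ} (ht : -1 < t) (hs : 0 < s) :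
    IntegrableOn (fun r => r ^ a * (1 - r) ^ t) (Icc s 1) := by
  have hint : IntervalIntegrable (fun r : ℝ => (1 - r) ^ t) volume s 1 := by
    simpa using (intervalIntegral.intervalIntegrable_rpow' (a := 1 - s) (b := 0) ht).comp_sub_left 1
  refine IntegrableOn.continuousOn_mul ?_ ?_ isCompact_Icc
  · exact continuousOn_id.rpow_const fun x hx => Or.inl (hs.trans_le hx.1).ne'
  · exact ((intervalIntegrable_iff' (μ := volume)).1 hint).mono_set Icc_subset_uIcc

noncomputable def gtConst (t : ℝ) : ℝ := (min (1 / 2) (t + 1))⁻¹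

lemma one_le_gtConst {t : ℝ} (ht : -1 < t) : 1 ≤ gtConst t :=
  one_le_inv₀ (lt_min (by norm_num) (by linarith)) |>.2 ((min_le_left _ _).trans (by norm_num))

lemma integral_rpow_mul_one_sub_rpow_le {t s : ℝ} (ht : -1 < t) (hs : s ∈ Ioo 0 1) :
    ∫ r in Ioo s 1, r ^ (-3 / 2 : ℝ) * (1 - r) ^ t
      ≤ gtConst t * s ^ (-1 / 2 : ℝ) * (1 - s) ^ (t + 1) := by
  set K := gtConst t
  have hK : 0 < K := zero_lt_one.trans_le (one_le_gtConst ht)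
  let g : ℝ → ℝ := fun x => -(K * (x ^ (-1 / 2 : ℝ) * (1 - x) ^ (t + 1)))
  let g' : ℝ → ℝ := fun x => -(K * ((-1 / 2) * x ^ (-1 / 2 - 1 : ℝ) * (1 - x) ^ (t + 1)
    - (t + 1) * x ^ (-1 / 2 : ℝ) * (1 - x) ^ (t + 1 - 1)))
  have hg : ContinuousOn g (Icc s 1) := by
    refine (continuousOn_const.mul (ContinuousOn.mul ?_ ?_)).neg
    · exact continuousOn_id.rpow_const fun x hx => Or.inl (hs.1.trans_le hx.1).ne'
    · exact (continuousOn_const.sub continuousOn_id).rpow_const fun _ _ => Or.inr (by linarith)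
  have hg' : ∀ x ∈ Ioo s 1, HasDerivWithinAt g (g' x) (Ioi x) x := fun x hx =>
    ((hasDerivAt_rpow_mul_one_sub_rpow _ _ ⟨hs.1.trans hx.1, hx.2⟩).const_mul K).neg
      |>.hasDerivWithinAt
  have hle : ∀ x ∈ Ioo s 1, x ^ (-3 / 2 : ℝ) * (1 - x) ^ t ≤ g' x := by
    intro x hx
    have hx0 : 0 < x := hs.1.trans hx.1
    have hx1 : 0 < 1 - x := by linarith [hx.2]
    have hK' : K⁻¹ ≤ (1 - x) / 2 + (t + 1) * x := by
      simp only [K, gtConst, inv_inv]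
      nlinarith [min_le_left (1 / 2 : ℝ) (t + 1), min_le_right (1 / 2 : ℝ) (t + 1)]
    have hpos : 0 ≤ x ^ (-3 / 2 : ℝ) * (1 - x) ^ t := by positivity
    have e1 : x ^ (-1 / 2 : ℝ) = x ^ (-3 / 2 : ℝ) * x := by
      rw [← Real.rpow_add_one hx0.ne']; norm_num
    have e2 : (1 - x) ^ (t + 1) = (1 - x) ^ t * (1 - x) := Real.rpow_add_one hx1.ne' t
    have e3 : x ^ (-1 / 2 - 1 : ℝ) = x ^ (-3 / 2 : ℝ) := by norm_num
    calc x ^ (-3 / 2 : ℝ) * (1 - x) ^ t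
        = K * (K⁻¹ * (x ^ (-3 / 2 : ℝ) * (1 - x) ^ t)) := by field_simp
      _ ≤ K * (((1 - x) / 2 + (t + 1) * x) * (x ^ (-3 / 2 : ℝ) * (1 - x) ^ t)) := by gcongr
      _ = g' x := by simp only [g', e1, e2, e3, add_sub_cancel_right]; ring
  have hg1 : g 1 = 0 := by simp [g, Real.zero_rpow (by linarith : t + 1 ≠ 0)]
  calc ∫ r in Ioo s 1, r ^ (-3 / 2 : ℝ) * (1 - r) ^ t
      = ∫ r in s..1, r ^ (-3 / 2 : ℝ) * (1 - r) ^ t := by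
        rw [intervalIntegral.integral_of_le hs.2.le, integral_Ioc_eq_integral_Ioo]
    _ ≤ g 1 - g s := intervalIntegral.integral_le_sub_of_hasDeriv_right_of_le hs.2.le hg hg'
        (integrableOn_rpow_mul_one_sub_rpow _ ht hs.1) hle
    _ = K * s ^ (-1 / 2 : ℝ) * (1 - s) ^ (t + 1) := by rw [hg1]; simp only [g]; ring

lemma pow_sub_one_le_rpow {r : ℝ} (hr0 : 0 < r) (hr1 : r ≤ 1) (m : ℕ) :
    r ^ (m - 1) ≤ r ^ ((m : ℝ) - 1) := by
  rcases m with _ | m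
  · simpa using Real.one_le_rpow_of_pos_of_le_one_of_nonpos hr0 hr1 (by norm_num : (-1 : ℝ) ≤ 0)
  · simp

lemma Ft_le {t : ℝ} (ht : -1 < t) {m j : ℕ} {e C : ℝ} {φ : ℝ → ℝ} (hC : 0 ≤ C)
    (he : -(m : ℝ) - 1 / 2 ≤ e) (hφ : ∀ r ∈ Ioo 0 1, φ r ≤ C * r ^ e * (1 - r) ^ j)
    {s : ℝ} (hs : s ∈ Ioo 0 1) :
    Ft t m φ s ≤ C * (1 - s) ^ j * ∫ r in Ioo s 1, r ^ (-3 / 2 : ℝ) * (1 - r) ^ t := by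
  rw [← integral_const_mul]
  have hbound : ∀ r ∈ Ioo s 1, r ^ (m - 1) * φ r * (1 - r) ^ t
      ≤ C * (1 - s) ^ j * (r ^ (-3 / 2 : ℝ) * (1 - r) ^ t) := by
    intro r hr
    have hr0 : 0 < r := hs.1.trans hr.1
    have hr1 : 0 < 1 - r := by linarith [hr.2]
    have hpow : r ^ (m - 1) * r ^ e ≤ r ^ (-3 / 2 : ℝ) :=
      calc r ^ (m - 1) * r ^ e ≤ r ^ ((m : ℝ) - 1) * r ^ (-(m : ℝ) - 1 / 2) :=
            mul_le_mul (pow_sub_one_le_rpow hr0 hr.2.le m)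
              (Real.rpow_le_rpow_of_exponent_ge hr0 hr.2.le he) (by positivity) (by positivity)
        _ = r ^ (-3 / 2 : ℝ) := by rw [← Real.rpow_add hr0]; congr 1; ring
    have hj : (1 - r) ^ j ≤ (1 - s) ^ j := pow_le_pow_left₀ hr1.le (by linarith [hr.1]) j
    calc r ^ (m - 1) * φ r * (1 - r) ^ t
        ≤ r ^ (m - 1) * (C * r ^ e * (1 - r) ^ j) * (1 - r) ^ t := by
          gcongr; exact hφ r ⟨hr0, hr.2⟩
      _ = C * (r ^ (m - 1) * r ^ e) * (1 - r) ^ j * (1 - r) ^ t := by ring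
      _ ≤ C * r ^ (-3 / 2 : ℝ) * (1 - s) ^ j * (1 - r) ^ t := by gcongr
      _ = C * (1 - s) ^ j * (r ^ (-3 / 2 : ℝ) * (1 - r) ^ t) := by ring
  have hnonneg : ∀ r ∈ Ioo s 1, 0 ≤ C * (1 - s) ^ j * (r ^ (-3 / 2 : ℝ) * (1 - r) ^ t) := by
    intro r hr
    have hr0 : 0 < r := hs.1.trans hr.1
    have hr1 : 0 < 1 - r := by linarith [hr.2]
    have hs1 : 0 < 1 - s := by linarith [hs.2]
    positivity
  by_cases hint : IntegrableOn (fun r => r ^ (m - 1) * φ r * (1 - r) ^ t) (Ioo s 1)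
  · refine setIntegral_mono_on hint ?_ measurableSet_Ioo hbound
    exact ((integrableOn_rpow_mul_one_sub_rpow _ ht hs.1).mono_set Ioo_subset_Icc_self).const_mul _
  · rw [Ft, integral_undef hint]
    exact setIntegral_nonneg measurableSet_Ioo hnonneg

lemma Gt_le {t : ℝ} (ht : -1 < t) {m j : ℕ} {e C : ℝ} {φ : ℝ → ℝ} (hC : 0 ≤ C)
    (he : -(m : ℝ) - 1 / 2 ≤ e) (hφ : ∀ r ∈ Ioo 0 1, φ r ≤ C * r ^ e * (1 - r) ^ j)
    {s : ℝ} (hs : s ∈ Ioo 0 1) :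
    Gt t m φ s ≤ gtConst t * C * s ^ (-(m : ℝ) - 1 / 2) * (1 - s) ^ j := by
  have hs0 : 0 < s := hs.1
  have hs1 : 0 < 1 - s := by linarith [hs.2]
  have hden : 0 < s ^ m * (1 - s) ^ (t + 1) := by positivity
  calc Gt t m φ s
      ≤ C * (1 - s) ^ j * (gtConst t * s ^ (-1 / 2 : ℝ) * (1 - s) ^ (t + 1))
        / (s ^ m * (1 - s) ^ (t + 1)) := by
        refine div_le_div_of_nonneg_right ((Ft_le ht hC he hφ hs).trans ?_) hden.le
        gcongr
        exact integral_rpow_mul_one_sub_rpow_le ht hs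
    _ = gtConst t * C * s ^ (-(m : ℝ) - 1 / 2) * (1 - s) ^ j := by
        rw [show -(m : ℝ) - 1 / 2 = -1 / 2 - m by ring, Real.rpow_sub hs.1, Real.rpow_natCast]
        field_simp

lemma Phi_le {t : ℝ} (ht : -1 < t) {n : ℕ} (hn : 0 < n) (k : ℕ) {s : ℝ} (hs : s ∈ Ioo 0 1) :
    Phi t n k s ≤ gtConst t ^ (2 * k) * s ^ (-(n : ℝ) - k + 1 / 2) * (1 - s) ^ k := by
  have hK : 0 ≤ gtConst t := zero_le_one.trans (one_le_gtConst ht)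
  induction k generalizing s with
  | zero =>
    have hn' : (1 : ℝ) ≤ n := by exact_mod_cast hn
    simpa [Phi] using Real.one_le_rpow_of_pos_of_le_one_of_nonpos hs.1 hs.2.le (by linarith)
  | succ k ih =>
    have hinner : ∀ r ∈ Ioo 0 1, Gt t (n + k) (Phi t n k) r
        ≤ gtConst t * gtConst t ^ (2 * k) * r ^ (-((n + k : ℕ) : ℝ) - 1 / 2) * (1 - r) ^ k :=
      fun r hr => Gt_le ht (by positivity) (by push_cast; linarith) (fun _ hr' => ih hr') hr
    have hs1 : 0 ≤ 1 - s := by linarith [hs.2]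
    calc Phi t n (k + 1) s = (1 - s) * Gt t (n + k) (Gt t (n + k) (Phi t n k)) s := rfl
      _ ≤ (1 - s) * (gtConst t * (gtConst t * gtConst t ^ (2 * k))
            * s ^ (-((n + k : ℕ) : ℝ) - 1 / 2) * (1 - s) ^ k) := by
          gcongr
          exact Gt_le ht (by positivity) le_rfl hinner hs
      _ = gtConst t ^ (2 * (k + 1)) * s ^ (-(n : ℝ) - (k + 1 : ℕ) + 1 / 2) * (1 - s) ^ (k + 1) := by
          rw [show -((n + k : ℕ) : ℝ) - 1 / 2 = -(n : ℝ) - (k + 1 : ℕ) + 1 / 2 by push_cast; ring]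
          ring

/-- Asymptotic behavior of the auxiliary functions `Φ^{(t)}_{n,k}`:
`Φ^{(t)}_{n,k}(s) ≲ s^{−n−k+1/2}(1−s)^k` and
`𝓖^{(t)}_{n+k}Φ^{(t)}_{n,k}(s) ≲ s^{−n−k−1/2}(1−s)^k`. -/
theorem stmt8 (t : ℝ) (ht : -1 < t) (n k : ℕ) (hn : 0 < n) :
    ∃ C : ℝ, 0 < C ∧ ∀ s ∈ Set.Ioo (0 : ℝ) 1,
      Phi t n k s ≤ C * s ^ (-(n : ℝ) - k + 1 / 2) * (1 - s) ^ k ∧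
      Gt t (n + k) (Phi t n k) s ≤ C * s ^ (-(n : ℝ) - k - 1 / 2) * (1 - s) ^ k := by
  have hK := one_le_gtConst ht
  refine ⟨gtConst t ^ (2 * k + 1), by positivity, fun s hs => ⟨?_, ?_⟩⟩
  · have hs0 : 0 < s := hs.1
    have hs1 : 0 < 1 - s := by linarith [hs.2]
    refine (Phi_le ht hn k hs).trans ?_
    gcongr
    omega
  · have hΦ := Gt_le (m := n + k) ht (by positivity) (by push_cast; linarith)
      (fun _ hr => Phi_le ht hn k hr) hs
    rwa [← pow_succ', show -((n + k : ℕ) : ℝ) - 1 / 2 = -(n : ℝ) - k - 1 / 2 by push_cast; ring]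
      at hΦ
end

section
/- Let t > −1, let m, k be positive integers, and let φ : (0,1) → [0,∞] be measurable. Then, as identities in [0,∞]: (i) ∫_0^1 r^{m+k−1}·(1−r)^{t+1}·𝓖^{(t)}_m φ(r) dr = (1/k)·𝓕^{(t)}_{m+k}φ(0); (ii) 𝓕^{(t)}_{m+k}(𝓖^{(t)}_m φ)(0) = ∑_{j=0}^∞ (1/(k+j))·𝓕^{(t)}_{m+k+j}φ(0); (iii) for every s ∈ [0,1), 𝓕^{(t)}_m φ(s) = 𝓕^{(t)}_m ψ(s) + 𝓕^{(t)}_{m+1}φ(s), where ψ(r) = (1−r)·φ(r); and (iv) 𝓕^{(t)}_m 1(0) = B(m, t+1), where B is the Euler Beta function. -/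
/-!
Parts (i) and (ii) rest on the identity `∫₀¹ r^(k-1) 𝓕_m φ(r) dr = k⁻¹ 𝓕_{m+k} φ(0)`, which is
Tonelli on the triangle `{r < ρ}`: the inner integral `∫₀^ρ r^(k-1) dr = ρ^k / k` raises the
power of `ρ` by `k`. In (i) the weight `r^(m+k-1) (1-r)^(t+1)` cancels the denominator of `𝓖_m`
up to `r^(k-1)`; in (ii) the leftover factor is `r^(k-1) / (1-r) = ∑ⱼ r^(k+j-1)`, and monotone
convergence applies the identity termwise. Part (iii) is the splitting `1 = (1 - r) + r` under
the integral, and (iv) is the Beta integral.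
-/

open MeasureTheory

/-- `𝓕^{(t)}_m φ(s) = ∫_s^1 r^{m−1} φ(r) (1−r)^t dr`, for `φ : (0,1) → [0,∞]`,
with values in `[0,∞]`. -/
noncomputable def FtE (t : ℝ) (m : ℕ) (φ : ℝ → ENNReal) (s : ℝ) : ENNReal :=
  ∫⁻ r in Set.Ioo s 1, ENNReal.ofReal (r ^ (m - 1) * (1 - r) ^ t) * φ r

/-- `𝓖^{(t)}_m φ(s) = 𝓕^{(t)}_m φ(s) / (s^m (1−s)^{t+1})`, with values in `[0,∞]`. -/
noncomputable def GtE (t : ℝ) (m : ℕ) (φ : ℝ → ENNReal) (s : ℝ) : ENNReal :=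
  FtE t m φ s / ENNReal.ofReal (s ^ m * (1 - s) ^ (t + 1))

open Set
open scoped ENNReal

theorem lintegral_Ioo_mul_lintegral_Ioo_swap {μ : Measure ℝ} [SFinite μ] {a b : ℝ}
    {f g : ℝ → ℝ≥0∞} (hf : Measurable f) (hg : Measurable g) :
    ∫⁻ x in Ioo a b, f x * ∫⁻ y in Ioo x b, g y ∂μ ∂μ
      = ∫⁻ y in Ioo a b, (∫⁻ x in Ioo a y, f x ∂μ) * g y ∂μ := by
  set F : ℝ × ℝ → ℝ≥0∞ := {p | p.1 < p.2}.indicator fun p => f p.1 * g p.2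
  have hF : Measurable F :=
    ((hf.comp measurable_fst).mul (hg.comp measurable_snd)).indicator
      (measurableSet_lt measurable_fst measurable_snd)
  calc ∫⁻ x in Ioo a b, f x * ∫⁻ y in Ioo x b, g y ∂μ ∂μ
      = ∫⁻ x in Ioo a b, ∫⁻ y in Ioo a b, F (x, y) ∂μ ∂μ := by
        refine setLIntegral_congr_fun measurableSet_Ioo fun x hx => ?_
        have hFx : ∀ y, F (x, y) = f x * (Ioi x).indicator g y := by
          intro y; by_cases h : x < y <;> simp [F, h]
        simp_rw [hFx, lintegral_const_mul _ (hg.indicator measurableSet_Ioi),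
          setLIntegral_indicator measurableSet_Ioi, Ioi_inter_Ioo, max_eq_left hx.1.le]
    _ = ∫⁻ y in Ioo a b, ∫⁻ x in Ioo a b, F (x, y) ∂μ ∂μ :=
        lintegral_lintegral_swap hF.aemeasurable
    _ = ∫⁻ y in Ioo a b, (∫⁻ x in Ioo a y, f x ∂μ) * g y ∂μ := by
        refine setLIntegral_congr_fun measurableSet_Ioo fun y hy => ?_
        have hFy : ∀ x, F (x, y) = (Iio y).indicator f x * g y := by
          intro x; by_cases h : x < y <;> simp [F, h]
        simp_rw [hFy, lintegral_mul_const _ (hf.indicator measurableSet_Iio),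
          setLIntegral_indicator measurableSet_Iio, Iio_inter_Ioo, min_eq_left hy.2.le]

theorem lintegral_Ioo_ofReal_pow {k : ℕ} (hk : 1 ≤ k) {x : ℝ} (hx : 0 ≤ x) :
    ∫⁻ r in Ioo 0 x, ENNReal.ofReal (r ^ (k - 1)) = ENNReal.ofReal (x ^ k / k) := by
  have hint : ∫ r in Ioo 0 x, r ^ (k - 1) = x ^ k / k := by
    rw [← integral_Ioc_eq_integral_Ioo, ← intervalIntegral.integral_of_le hx, integral_pow,
      Nat.sub_add_cancel hk, Nat.cast_sub hk]
    simp [zero_pow (by omega : k ≠ 0)]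
  rw [← hint, ofReal_integral_eq_lintegral_ofReal]
  · exact (intervalIntegral.intervalIntegrable_pow _).1.mono_set Ioo_subset_Ioc_self
  · filter_upwards [ae_restrict_mem measurableSet_Ioo] with r hr using pow_nonneg hr.1.le _

theorem ENNReal.ofReal_pow_div_one_sub {r : ℝ} (hr₀ : 0 ≤ r) (hr₁ : r < 1) (n : ℕ) :
    ENNReal.ofReal (r ^ n / (1 - r)) = ∑' j, ENNReal.ofReal (r ^ (n + j)) := by
  have hgeom : (ENNReal.ofReal (1 - r))⁻¹ = ∑' j : ℕ, ENNReal.ofReal r ^ j := by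
    rw [ENNReal.tsum_geometric, ENNReal.ofReal_sub _ hr₀, ENNReal.ofReal_one]
  rw [ENNReal.ofReal_div_of_pos (sub_pos.2 hr₁), div_eq_mul_inv, hgeom,
    ← ENNReal.tsum_mul_left]
  simp_rw [pow_add, ENNReal.ofReal_mul (pow_nonneg hr₀ _), ENNReal.ofReal_pow hr₀]

theorem lintegral_Ioo_ofReal_rpow_mul_one_sub_rpow {a b : ℝ} (ha : 0 < a) (hb : 0 < b) :
    ∫⁻ x in Ioo 0 1, ENNReal.ofReal (x ^ (a - 1) * (1 - x) ^ (b - 1))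
      = ENNReal.ofReal (Real.Gamma a * Real.Gamma b / Real.Gamma (a + b)) := by
  have hcomplex : ∀ x ∈ Icc (0 : ℝ) 1, (x : ℂ) ^ ((a : ℂ) - 1) * (1 - (x : ℂ)) ^ ((b : ℂ) - 1)
      = ((x ^ (a - 1) * (1 - x) ^ (b - 1) : ℝ) : ℂ) := by
    intro x hx
    rw [Complex.ofReal_mul, Complex.ofReal_cpow hx.1, Complex.ofReal_cpow (sub_nonneg.2 hx.2)]
    push_cast; rfl
  have hconv := Complex.betaIntegral_convergent (u := a) (v := b) (by simpa) (by simpa)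
  have hint : IntegrableOn (fun x : ℝ => x ^ (a - 1) * (1 - x) ^ (b - 1)) (Ioc 0 1) := by
    refine IntegrableOn.congr_fun
      ((intervalIntegrable_iff_integrableOn_Ioc_of_le zero_le_one).1 hconv).re
      (fun x hx => ?_) measurableSet_Ioc
    simp [hcomplex x (Ioc_subset_Icc_self hx)]
  have hbeta : ∫ x in (0 : ℝ)..1, x ^ (a - 1) * (1 - x) ^ (b - 1)
      = Real.Gamma a * Real.Gamma b / Real.Gamma (a + b) := by
    apply Complex.ofReal_injective
    rw [← intervalIntegral.integral_ofReal, ← intervalIntegral.integral_congr (fun x hx =>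
      hcomplex x (by rwa [uIcc_of_le zero_le_one] at hx)), ← Complex.betaIntegral,
      Complex.betaIntegral_eq_Gamma_mul_div _ _ (by simpa) (by simpa)]
    push_cast [← Complex.Gamma_ofReal]; rfl
  rw [← hbeta, intervalIntegral.integral_of_le zero_le_one, integral_Ioc_eq_integral_Ioo,
    ofReal_integral_eq_lintegral_ofReal (hint.mono_set Ioo_subset_Ioc_self)]
  filter_upwards [ae_restrict_mem measurableSet_Ioo] with x hx
  have : 0 < 1 - x := sub_pos.2 hx.2
  have := hx.1
  positivity

namespace FtE

theorem antitone (t : ℝ) (m : ℕ) (φ : ℝ → ℝ≥0∞) : Antitone (FtE t m φ) :=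
  fun _ _ hab => lintegral_mono_set (Ioo_subset_Ioo_left hab)

variable {t : ℝ} {φ : ℝ → ℝ≥0∞}

theorem measurable_integrand (m : ℕ) (hφ : Measurable φ) :
    Measurable fun r => ENNReal.ofReal (r ^ (m - 1) * (1 - r) ^ t) * φ r := by
  fun_prop

theorem lintegral_ofReal_pow_mul {m k : ℕ} (hm : 1 ≤ m) (hk : 1 ≤ k) (hφ : Measurable φ) :
    ∫⁻ r in Ioo 0 1, ENNReal.ofReal (r ^ (k - 1)) * FtE t m φ r
      = (k : ℝ≥0∞)⁻¹ * FtE t (m + k) φ 0 := by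
  unfold FtE
  rw [lintegral_Ioo_mul_lintegral_Ioo_swap (by fun_prop) (measurable_integrand _ hφ),
    ← lintegral_const_mul _ (measurable_integrand _ hφ)]
  refine setLIntegral_congr_fun measurableSet_Ioo fun r ⟨hr₀, _⟩ => ?_
  have hpow : r ^ (m + k - 1) * (1 - r) ^ t = r ^ k * (r ^ (m - 1) * (1 - r) ^ t) := by
    rw [← mul_assoc, ← pow_add]; congr 2; omega
  rw [lintegral_Ioo_ofReal_pow hk hr₀.le, hpow, ENNReal.ofReal_mul (pow_nonneg hr₀.le k),
    ENNReal.ofReal_div_of_pos (by positivity), ENNReal.ofReal_natCast, div_eq_mul_inv]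
  ring

end FtE

theorem GtE.ofReal_mul (t : ℝ) (m : ℕ) (φ : ℝ → ℝ≥0∞) {r : ℝ} (hr : r ∈ Ioo 0 1) :
    ENNReal.ofReal (r ^ m * (1 - r) ^ (t + 1)) * GtE t m φ r = FtE t m φ r := by
  have : 0 < r ^ m * (1 - r) ^ (t + 1) :=
    mul_pos (pow_pos hr.1 _) (Real.rpow_pos_of_pos (sub_pos.2 hr.2) _)
  exact ENNReal.mul_div_cancel (by simpa) ENNReal.ofReal_ne_top

section Identities

variable {t : ℝ} {m : ℕ} {φ : ℝ → ℝ≥0∞}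

theorem lintegral_ofReal_pow_mul_GtE {k : ℕ} (hm : 1 ≤ m) (hk : 1 ≤ k) (hφ : Measurable φ) :
    ∫⁻ r in Ioo 0 1, ENNReal.ofReal (r ^ (m + k - 1) * (1 - r) ^ (t + 1)) * GtE t m φ r
      = (k : ℝ≥0∞)⁻¹ * FtE t (m + k) φ 0 := by
  rw [← FtE.lintegral_ofReal_pow_mul hm hk hφ]
  refine setLIntegral_congr_fun measurableSet_Ioo fun r hr => ?_
  have hsplit : r ^ (m + k - 1) * (1 - r) ^ (t + 1)
      = r ^ (k - 1) * (r ^ m * (1 - r) ^ (t + 1)) := by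
    rw [← mul_assoc, ← pow_add]; congr 2; omega
  rw [hsplit, ENNReal.ofReal_mul (pow_nonneg hr.1.le _), mul_assoc, GtE.ofReal_mul t m φ hr]

theorem FtE_GtE_zero_eq_tsum {k : ℕ} (hm : 1 ≤ m) (hk : 1 ≤ k) (hφ : Measurable φ) :
    FtE t (m + k) (GtE t m φ) 0
      = ∑' j : ℕ, ((k : ℝ≥0∞) + j)⁻¹ * FtE t (m + k + j) φ 0 := by
  have hexpand : ∀ r ∈ Ioo (0 : ℝ) 1,
      ENNReal.ofReal (r ^ (m + k - 1) * (1 - r) ^ t) * GtE t m φ r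
        = ∑' j : ℕ, ENNReal.ofReal (r ^ (k + j - 1)) * FtE t m φ r := by
    rintro r hr
    have h1r : 0 < 1 - r := sub_pos.2 hr.2
    have hsplit : r ^ (m + k - 1) * (1 - r) ^ t
        = r ^ (k - 1) / (1 - r) * (r ^ m * (1 - r) ^ (t + 1)) := by
      rw [Real.rpow_add_one h1r.ne', show m + k - 1 = k - 1 + m by omega, pow_add]
      field_simp
    rw [hsplit, ENNReal.ofReal_mul (div_nonneg (pow_nonneg hr.1.le _) h1r.le), mul_assoc,
      GtE.ofReal_mul t m φ hr, ENNReal.ofReal_pow_div_one_sub hr.1.le hr.2,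
      ← ENNReal.tsum_mul_right]
    exact tsum_congr fun j => by rw [show k - 1 + j = k + j - 1 by omega]
  have hF := (FtE.antitone t m φ).measurable
  rw [FtE, setLIntegral_congr_fun measurableSet_Ioo hexpand, lintegral_tsum fun j => by fun_prop]
  refine tsum_congr fun j => ?_
  rw [FtE.lintegral_ofReal_pow_mul hm (by omega) hφ, Nat.cast_add, add_assoc]

theorem FtE_eq_FtE_one_sub_mul_add_FtE_succ (hm : 1 ≤ m) (hφ : Measurable φ) {s : ℝ}
    (hs : 0 ≤ s) :
    FtE t m φ s = FtE t m (fun r => ENNReal.ofReal (1 - r) * φ r) s + FtE t (m + 1) φ s := by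
  unfold FtE
  rw [← lintegral_add_left (by fun_prop)]
  refine setLIntegral_congr_fun measurableSet_Ioo fun r hr => ?_
  have hr₀ : 0 < r := hs.trans_lt hr.1
  have h1r : 0 < 1 - r := sub_pos.2 hr.2
  have hsplit : r ^ (m - 1) * (1 - r) ^ t
      = r ^ (m - 1) * (1 - r) ^ t * (1 - r) + r ^ (m + 1 - 1) * (1 - r) ^ t := by
    rw [Nat.add_sub_cancel, ← Nat.sub_add_cancel hm, pow_succ, Nat.add_sub_cancel]
    ring
  beta_reduce
  nth_rewrite 1 [hsplit]
  rw [ENNReal.ofReal_add (by positivity) (by positivity), ENNReal.ofReal_mul (by positivity),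
    add_mul, mul_assoc]

theorem FtE_one_zero_eq_Gamma_mul_div (ht : -1 < t) (hm : 1 ≤ m) :
    FtE t m (fun _ => 1) 0
      = ENNReal.ofReal (Real.Gamma m * Real.Gamma (t + 1) / Real.Gamma (m + t + 1)) := by
  rw [add_assoc, ← lintegral_Ioo_ofReal_rpow_mul_one_sub_rpow (by exact_mod_cast hm)
    (by linarith)]
  refine setLIntegral_congr_fun measurableSet_Ioo fun r _ => ?_
  rw [mul_one, add_sub_cancel_right, ← Real.rpow_natCast, Nat.cast_sub hm, Nat.cast_one]

end Identities

/-- Basic identities for the operations `𝓕^{(t)}_m` and `𝓖^{(t)}_m`, as identities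
in `[0,∞]`:
(i) `∫_0^1 r^{m+k−1}(1−r)^{t+1} 𝓖^{(t)}_m φ(r) dr = (1/k) 𝓕^{(t)}_{m+k}φ(0)`;
(ii) `𝓕^{(t)}_{m+k}(𝓖^{(t)}_m φ)(0) = ∑_{j≥0} (1/(k+j)) 𝓕^{(t)}_{m+k+j}φ(0)`;
(iii) `𝓕^{(t)}_m φ = 𝓕^{(t)}_m ((1−·)φ) + 𝓕^{(t)}_{m+1}φ` on `[0,1)`;
(iv) `𝓕^{(t)}_m 1(0) = B(m, t+1)`. -/
theorem stmt9 (t : ℝ) (ht : -1 < t) (m k : ℕ) (hm : 1 ≤ m) (hk : 1 ≤ k)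
    (φ : ℝ → ENNReal) (hφ : Measurable φ) :
    ((∫⁻ r in Set.Ioo (0 : ℝ) 1,
        ENNReal.ofReal (r ^ (m + k - 1) * (1 - r) ^ (t + 1)) * GtE t m φ r)
      = (k : ENNReal)⁻¹ * FtE t (m + k) φ 0) ∧
    (FtE t (m + k) (GtE t m φ) 0
      = ∑' j : ℕ, ((k : ENNReal) + (j : ENNReal))⁻¹ * FtE t (m + k + j) φ 0) ∧
    (∀ s ∈ Set.Ico (0 : ℝ) 1,
      FtE t m φ s = FtE t m (fun r => ENNReal.ofReal (1 - r) * φ r) s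
        + FtE t (m + 1) φ s) ∧
    (FtE t m (fun _ => 1) 0
      = ENNReal.ofReal (Real.Gamma m * Real.Gamma (t + 1) / Real.Gamma (m + t + 1))) :=
  ⟨lintegral_ofReal_pow_mul_GtE hm hk hφ, FtE_GtE_zero_eq_tsum hm hk hφ,
    fun _ hs => FtE_eq_FtE_one_sub_mul_add_FtE_succ hm hφ hs.1, FtE_one_zero_eq_Gamma_mul_div ht hm⟩
end

section
/- Let n ≥ 1, c > 0 and p > 2n/c. There exists a constant C > 0, independent of t, such that for every real t ≥ −1, ∑_{α ∈ ℕ₀ⁿ} ( B(n+|α|+t+1, c) / B(n+t+1, c) )^{p/2} ≤ C·(t+n+1)ⁿ; in particular this series converges. -/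
/-!
Put `a = n + t + 1` and `k = |α|`. The recurrence `B(x+1,c) = x/(x+c) B(x,c)` writes the ratio as
`∏_{j<k} (a+j)/(a+j+c)`, and `x/(x+c) ≤ ((x+c)/(x+c+1))^c` makes this product telescope to at most
`((a+c)/(a+c+k))^c ≤ ((1+c) a/(a+k))^c`. With `b = a/n` and `q = cp/(2n) > 1`, AM-GM gives
`(a/(a+|α|))^{nq} ≤ ∏ᵢ (b/(b+αᵢ))^q`, so the series is dominated by `(1+c)^{cp/2}` times the
`n`-th power of `∑ₘ (b/(b+m))^q`, which the integral test bounds by `1 + b/(q-1) ≤ bq/(q-1)`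
for `b ≥ 1`.
-/

open MeasureTheory

/-- The Euler Beta function `B(x,y) = Γ(x)Γ(y)/Γ(x+y)`. -/
noncomputable def Bfun (x y : ℝ) : ℝ := Real.Gamma x * Real.Gamma y / Real.Gamma (x + y)

open Finset Real

theorem Bfun_pos {x y : ℝ} (hx : 0 < x) (hy : 0 < y) : 0 < Bfun x y := by
  unfold Bfun
  have := Gamma_pos_of_pos hx
  have := Gamma_pos_of_pos hy
  have := Gamma_pos_of_pos (add_pos hx hy)
  positivity

theorem Bfun_add_one {x c : ℝ} (hx : x ≠ 0) (hxc : x + c ≠ 0) :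
    Bfun (x + 1) c = x / (x + c) * Bfun x c := by
  rw [Bfun, Bfun, Gamma_add_one hx, add_right_comm, Gamma_add_one hxc, div_mul_div_comm,
    mul_assoc]

theorem Bfun_add_nat_div_Bfun {a c : ℝ} (ha : 0 < a) (hc : 0 < c) (k : ℕ) :
    Bfun (a + k) c / Bfun a c = ∏ j ∈ range k, (a + j) / (a + j + c) := by
  induction k with
  | zero => simp [(Bfun_pos ha hc).ne']
  | succ k ih =>
    rw [Nat.cast_succ, ← add_assoc, Bfun_add_one (by positivity) (by positivity), mul_div_assoc,
      ih, prod_range_succ, mul_comm]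

theorem div_add_le_rpow_div_add_one {x c : ℝ} (hx : 0 < x) (hc : 0 ≤ c) :
    x / (x + c) ≤ ((x + c) / (x + c + 1)) ^ c := by
  have hy : 0 < x + c := by linarith
  have hexp : exp (-(1 / (x + c))) ≤ (x + c) / (x + c + 1) := by
    rw [exp_neg, show (x + c) / (x + c + 1) = (1 / (x + c) + 1)⁻¹ by field_simp; ring]
    exact inv_anti₀ (by positivity) (add_one_le_exp _)
  calc x / (x + c) = 1 - c / (x + c) := by field_simp; ring
    _ ≤ exp (-(c / (x + c))) := by linarith [add_one_le_exp (-(c / (x + c)))]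
    _ = exp (-(1 / (x + c))) ^ c := by rw [← exp_mul]; ring_nf
    _ ≤ ((x + c) / (x + c + 1)) ^ c := by gcongr

theorem prod_div_add_le_rpow {a c : ℝ} (ha : 0 < a) (hc : 0 ≤ c) (k : ℕ) :
    ∏ j ∈ range k, (a + j) / (a + j + c) ≤ ((a + c) / (a + c + k)) ^ c := by
  induction k with
  | zero => simp [div_self (by positivity : a + c ≠ 0)]
  | succ k ih =>
    have hfac : (a + k) / (a + k + c) ≤ ((a + c + k) / (a + c + k + 1)) ^ c := by
      rw [add_right_comm a c]
      exact div_add_le_rpow_div_add_one (by positivity) hc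
    calc ∏ j ∈ range (k + 1), (a + j) / (a + j + c)
        ≤ ((a + c) / (a + c + k)) ^ c * ((a + c + k) / (a + c + k + 1)) ^ c := by
          rw [prod_range_succ]
          exact mul_le_mul ih hfac (by positivity) (by positivity)
      _ = ((a + c) / (a + c + (k + 1 : ℕ))) ^ c := by
          rw [← mul_rpow (by positivity) (by positivity), div_mul_div_cancel₀ (by positivity),
            Nat.cast_succ, add_assoc (a + c)]

theorem Bfun_add_nat_div_Bfun_rpow_le {a c r : ℝ} (ha : 1 ≤ a) (hc : 0 < c) (hr : 0 ≤ r) (k : ℕ) :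
    (Bfun (a + k) c / Bfun a c) ^ r ≤ (1 + c) ^ (c * r) * (a / (a + k)) ^ (c * r) := by
  have ha0 : 0 < a := by linarith
  have hbase : (a + c) / (a + c + k) ≤ (1 + c) * (a / (a + k)) := by
    rw [mul_div_assoc', div_le_div_iff₀ (by positivity) (by positivity)]
    nlinarith [mul_nonneg hc.le (mul_nonneg (Nat.cast_nonneg k) (sub_nonneg.2 ha)),
      mul_pos (mul_pos hc ha0) (add_pos ha0 hc)]
  rw [Bfun_add_nat_div_Bfun ha0 hc, ← mul_rpow (by positivity) (by positivity), rpow_mul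
    (by positivity)]
  gcongr
  exact (prod_div_add_le_rpow ha0 hc.le k).trans (by gcongr)

theorem div_add_mean_rpow_le_prod {ι : Type*} [Fintype ι] [Nonempty ι] {b q : ℝ} (hb : 0 < b)
    (hq : 0 ≤ q) {x : ι → ℝ} (hx : ∀ i, 0 ≤ x i) :
    (b / (b + (∑ i, x i) / Fintype.card ι)) ^ (Fintype.card ι * q) ≤ ∏ i, (b / (b + x i)) ^ q := by
  set N : ℝ := (Fintype.card ι : ℝ)
  have hN : 0 < N := by simp [N, Fintype.card_pos]
  have hz : ∀ i, 0 < b + x i := fun i => by linarith [hx i]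
  have hP : 0 < ∏ i, (b + x i) := prod_pos fun i _ => hz i
  have hG : 0 < (∏ i, (b + x i)) ^ N⁻¹ := by positivity
  have amgm : (∏ i, (b + x i)) ^ N⁻¹ ≤ b + (∑ i, x i) / N := by
    have := geom_mean_le_arith_mean univ (fun _ => 1) (fun i => b + x i) (fun _ _ => zero_le_one)
      (by simp [Fintype.card_pos]) (fun i _ => (hz i).le)
    simpa [sum_add_distrib, N, add_div, mul_div_cancel_left₀ _ hN.ne'] using this
  have hbN : b ^ N = ∏ _i : ι, b := by rw [prod_const, card_univ, rpow_natCast]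
  calc (b / (b + (∑ i, x i) / N)) ^ (N * q)
      ≤ (b / (∏ i, (b + x i)) ^ N⁻¹) ^ (N * q) := by
        have := sum_nonneg fun i (_ : i ∈ univ) => hx i
        gcongr
    _ = ∏ i, (b / (b + x i)) ^ q := by
      rw [rpow_mul (by positivity), div_rpow hb.le hG.le, rpow_inv_rpow hP.le hN.ne', hbN,
        ← prod_div_distrib, finsetProd_rpow _ _ (fun i _ => (div_pos hb (hz i)).le)]

theorem hasSum_fin_pi_prod {ι : Type*} {g : ι → ℝ} (hg0 : 0 ≤ g) (hg : Summable g) (n : ℕ) :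
    HasSum (fun α : Fin n → ι => ∏ i, g (α i)) ((∑' m, g m) ^ n) := by
  induction n with
  | zero => simp
  | succ n ih =>
    have hprod := hg.hasSum.mul ih <| hg.mul_of_nonneg (g := fun α : Fin n → ι => ∏ i, g (α i))
      ih.summable hg0 fun α => prod_nonneg fun i _ => hg0 (α i)
    have hcons : (fun α : Fin (n + 1) → ι => ∏ i, g (α i)) ∘ Fin.consEquiv (fun _ => ι) =
        fun x => g x.1 * ∏ i, g (x.2 i) :=
      funext fun x => Fin.prod_univ_succ _
    rw [pow_succ', ← (Fin.consEquiv fun _ => ι).hasSum_iff, hcons]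
    exact hprod

theorem sum_range_add_rpow_neg_le {b q : ℝ} (hb : 0 < b) (hq : 1 < q) (M : ℕ) :
    ∑ i ∈ range M, (b + (i + 1 : ℕ)) ^ (-q) ≤ b ^ (1 - q) / (q - 1) := by
  have hanti : AntitoneOn (fun x : ℝ => x ^ (-q)) (Set.Icc b (b + M)) :=
    fun x hx y _ hxy => rpow_le_rpow_of_nonpos (hb.trans_le hx.1) hxy (by linarith)
  have hM : 0 ≤ (b + M) ^ (1 - q) := by positivity
  calc ∑ i ∈ range M, (b + (i + 1 : ℕ)) ^ (-q)
      ≤ ∫ x in b..b + M, x ^ (-q) := hanti.sum_le_integral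
    _ = ((b + M) ^ (1 - q) - b ^ (1 - q)) / (1 - q) := by
      rw [integral_rpow (Or.inr ⟨by linarith, fun h => ?_⟩), neg_add_eq_sub]
      rw [Set.uIcc_of_le (by linarith [M.cast_nonneg (α := ℝ)])] at h
      linarith [h.1]
    _ ≤ b ^ (1 - q) / (q - 1) := by
      rw [← neg_div_neg_eq, neg_sub, neg_sub]
      exact div_le_div_of_nonneg_right (by linarith) (by linarith)

theorem sum_range_div_add_rpow_le {b q : ℝ} (hb : 0 < b) (hq : 1 < q) (N : ℕ) :
    ∑ m ∈ range N, (b / (b + m)) ^ q ≤ 1 + b / (q - 1) := by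
  have hq1 : 0 < q - 1 := by linarith
  rcases N with _ | M
  · simp only [range_zero, sum_empty]
    positivity
  have hterm (m : ℕ) : (b / (b + (m + 1 : ℕ))) ^ q = b ^ q * (b + (m + 1 : ℕ)) ^ (-q) := by
    rw [div_rpow hb.le (by positivity), rpow_neg (by positivity), div_eq_mul_inv]
  rw [sum_range_succ', Nat.cast_zero, add_zero, div_self hb.ne', one_rpow]
  simp_rw [hterm]
  rw [← mul_sum, add_comm]
  calc 1 + b ^ q * ∑ i ∈ range M, (b + (i + 1 : ℕ)) ^ (-q)
      ≤ 1 + b ^ q * (b ^ (1 - q) / (q - 1)) := by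
        gcongr
        exact sum_range_add_rpow_neg_le hb hq M
    _ = 1 + b / (q - 1) := by rw [← mul_div_assoc, ← rpow_add hb, add_sub_cancel, rpow_one]

theorem summable_div_add_rpow {b q : ℝ} (hb : 0 < b) (hq : 1 < q) :
    Summable fun m : ℕ => (b / (b + m)) ^ q :=
  summable_of_sum_range_le (fun _ => by positivity) (sum_range_div_add_rpow_le hb hq)

theorem tsum_div_add_rpow_le {b q : ℝ} (hb : 1 ≤ b) (hq : 1 < q) :
    ∑' m : ℕ, (b / (b + m)) ^ q ≤ b * q / (q - 1) := by
  have hq1 : 0 < q - 1 := by linarith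
  calc ∑' m : ℕ, (b / (b + m)) ^ q ≤ 1 + b / (q - 1) :=
        Real.tsum_le_of_sum_range_le (fun _ => by positivity)
          (sum_range_div_add_rpow_le (by positivity) hq)
    _ ≤ b + b / (q - 1) := by linarith
    _ = b * q / (q - 1) := by field_simp; ring

theorem Bfun_add_sum_div_Bfun_rpow_le_prod {n : ℕ} (hn : 1 ≤ n) {a c r : ℝ} (ha : n ≤ a)
    (hc : 0 < c) (hr : 0 ≤ r) (α : Fin n → ℕ) :
    (Bfun (a + (∑ i, α i : ℕ)) c / Bfun a c) ^ r ≤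
      (1 + c) ^ (c * r) * ∏ i, (a / n / (a / n + α i)) ^ (c * r / n) := by
  have hn0 : (0 : ℝ) < n := by exact_mod_cast hn
  have ha0 : 0 < a := hn0.trans_le ha
  have : NeZero n := ⟨by omega⟩
  calc (Bfun (a + (∑ i, α i : ℕ)) c / Bfun a c) ^ r
      ≤ (1 + c) ^ (c * r) * (a / (a + (∑ i, α i : ℕ))) ^ (c * r) :=
        Bfun_add_nat_div_Bfun_rpow_le (le_trans (by exact_mod_cast hn) ha) hc hr _
    _ = (1 + c) ^ (c * r) * (a / n / (a / n + (∑ i, (α i : ℝ)) / n)) ^ (n * (c * r / n)) := by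
        rw [mul_div_cancel₀ _ hn0.ne', ← add_div, div_div_div_cancel_right₀ hn0.ne']
        push_cast
        rfl
    _ ≤ (1 + c) ^ (c * r) * ∏ i, (a / n / (a / n + α i)) ^ (c * r / n) := by
        gcongr
        simpa using div_add_mean_rpow_le_prod (b := a / n) (q := c * r / n) (x := fun i => (α i : ℝ))
          (by positivity) (by positivity) (fun i => by positivity)

theorem Bfun_add_sum_div_Bfun_rpow_summable_and_tsum_le {n : ℕ} (hn : 1 ≤ n) {a c r : ℝ}
    (ha : n ≤ a) (hc : 0 < c) (hcr : n < c * r) :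
    (Summable fun α : Fin n → ℕ => (Bfun (a + (∑ i, α i : ℕ)) c / Bfun a c) ^ r) ∧
      ∑' α : Fin n → ℕ, (Bfun (a + (∑ i, α i : ℕ)) c / Bfun a c) ^ r ≤
        (1 + c) ^ (c * r) * (c * r / (n * (c * r - n))) ^ n * a ^ n := by
  have hn0 : (0 : ℝ) < n := by exact_mod_cast hn
  have ha0 : 0 < a := hn0.trans_le ha
  have hr : 0 ≤ r := by
    by_contra! h
    linarith [mul_neg_of_pos_of_neg hc h]
  set q := c * r / n
  have hq : 1 < q := by rwa [lt_div_iff₀ hn0, one_mul]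
  have hprod := hasSum_fin_pi_prod (g := fun m : ℕ => (a / n / (a / n + m)) ^ q)
    (fun m => by positivity) (summable_div_add_rpow (by positivity) hq) n
  have hbound := Bfun_add_sum_div_Bfun_rpow_le_prod hn ha hc hr
  have hnonneg (α : Fin n → ℕ) : 0 ≤ (Bfun (a + (∑ i, α i : ℕ)) c / Bfun a c) ^ r :=
    rpow_nonneg (div_nonneg (Bfun_pos (by positivity) hc).le (Bfun_pos ha0 hc).le) _
  have hsum := (hprod.summable.mul_left _).of_nonneg_of_le hnonneg hbound
  refine ⟨hsum, ?_⟩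
  calc _ ≤ (1 + c) ^ (c * r) * (∑' m : ℕ, (a / n / (a / n + m)) ^ q) ^ n := by
        rw [← hprod.tsum_eq, ← tsum_mul_left]
        exact hsum.tsum_le_tsum hbound (hprod.summable.mul_left _)
    _ ≤ (1 + c) ^ (c * r) * (a / n * q / (q - 1)) ^ n := by
        gcongr
        exact tsum_div_add_rpow_le ((one_le_div hn0).2 ha) hq
    _ = (1 + c) ^ (c * r) * (c * r / (n * (c * r - n))) ^ n * a ^ n := by
        have : c * r - n ≠ 0 := by linarith
        rw [mul_assoc, ← mul_pow]
        congr 2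
        simp only [q]
        rw [div_sub_one hn0.ne']
        field_simp

/-- Uniform (in `t ≥ −1`) bound for the Schatten-norm series of the embedding
operators: for `c > 0` and `p > 2n/c`,
`∑_{α ∈ ℕ₀ⁿ} (B(n+|α|+t+1,c)/B(n+t+1,c))^{p/2} ≤ C (t+n+1)ⁿ`. -/
theorem stmt12 (n : ℕ) (hn : 1 ≤ n) (c p : ℝ) (hc : 0 < c) (hp : 2 * n / c < p) :
    ∃ C : ℝ, 0 < C ∧ ∀ t : ℝ, -1 ≤ t →
      (Summable fun α : Fin n → ℕ =>
        (Bfun ((n : ℝ) + (∑ i, α i : ℕ) + t + 1) c / Bfun ((n : ℝ) + t + 1) c) ^ (p / 2)) ∧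
      (∑' α : Fin n → ℕ,
          (Bfun ((n : ℝ) + (∑ i, α i : ℕ) + t + 1) c / Bfun ((n : ℝ) + t + 1) c) ^ (p / 2))
        ≤ C * (t + n + 1) ^ n := by
  have hcp : (n : ℝ) < c * (p / 2) := by
    rw [div_lt_iff₀ hc] at hp
    linarith
  refine ⟨(1 + c) ^ (c * (p / 2)) * (c * (p / 2) / (n * (c * (p / 2) - n))) ^ n, ?_, fun t ht => ?_⟩
  · have : 0 < c * (p / 2) - n := by linarith
    have : (0 : ℝ) < n := by exact_mod_cast hn
    have : 0 < c * (p / 2) := by linarith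
    positivity
  have hshift (x : ℝ) : (n : ℝ) + x + t + 1 = (n + t + 1) + x := by ring
  simp_rw [hshift, show t + n + 1 = n + t + 1 by ring]
  exact Bfun_add_sum_div_Bfun_rpow_summable_and_tsum_le hn (by linarith) hc hcp
end
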